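/- arXiv:1810.02945 — 11 statements merged into one kernel-verified Lean document; each statement's English description precedes it below -/
import Mathlib

section
/- Let A, Q be finite nonempty sets, F a clone on A containing a ∂-function (a ternary function ∂ with ∂(x,x,y)=∂(x,y,x)=∂(y,x,x)=x for all x,y), and H ⊆ A^Q a Q-invariant set of F with |H(q)| ≤ 2 for all q ∈ Q. If p,q ∈ Q, a ∈ H(p), and H weakly separates p from q at the point a, then H strongly separates p from q at a. -/
open Function

/-- `f` (an `n`-ary operation on `A`) preserves `H ⊆ A^Q` if `H` is closed under
pointwise application of `f`. -/
def ClPreserves {A Q : Type*} {n : ℕ} (f : (Fin n → A) → A) (H : Set (Q → A)) : Prop :=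
  ∀ h : Fin n → Q → A, (∀ i, h i ∈ H) → (fun q => f fun i => h i q) ∈ H

/-- `H` is a `Q`-invariant set of the family of operations `F`. -/
def ClInvariant {A Q : Type*} (F : ∀ n : ℕ, Set ((Fin n → A) → A)) (H : Set (Q → A)) : Prop :=
  ∀ (n : ℕ) (f : (Fin n → A) → A), f ∈ F n → ClPreserves f H

/-- `F` is a clone: contains all projections and is closed under composition. -/
def IsClone {A : Type*} (F : ∀ n : ℕ, Set ((Fin n → A) → A)) : Prop :=
  (∀ (n : ℕ) (i : Fin n), (fun x => x i) ∈ F n) ∧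
  (∀ (n m : ℕ) (f : (Fin n → A) → A) (g : Fin n → (Fin m → A) → A),
    f ∈ F n → (∀ i, g i ∈ F m) → (fun x => f fun i => g i x) ∈ F m)

/-- Restriction of `h : Q → A` to a subset `P ⊆ Q`. -/
def restrictTo {A Q : Type*} (P : Set Q) (h : Q → A) : P → A := fun x => h x

/-- `H(q) = {h q : h ∈ H}`. -/
def valuesAt {A Q : Type*} (H : Set (Q → A)) (q : Q) : Set A := (fun h => h q) '' H

/-- A ∂-function (majority/discriminator). -/
def IsPartialFn {A : Type*} (f : (Fin 3 → A) → A) : Prop :=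
  ∀ x y : A, f ![x, x, y] = x ∧ f ![x, y, x] = x ∧ f ![y, x, x] = x

/-- Condition Δ^∂. -/
def DeltaPartial {A : Type*} (F : ∀ n : ℕ, Set ((Fin n → A) → A)) : Prop :=
  ∀ a : Fin 3 → A, Function.Injective a → ∀ j : Fin 3,
    ∃ p ∈ F 3, IsPartialFn p ∧ p a = a j

/-- Condition Δ^s_n. -/
def DeltaS {A : Type*} (F : ∀ n : ℕ, Set ((Fin n → A) → A)) (n : ℕ) : Prop :=
  ∃ i : Fin n, ∀ a : Fin n → A, Function.Injective a → ∀ j : Fin n,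
    ∃ s ∈ F n, s a = a j ∧ ∀ x : Fin n → A, ¬ Function.Injective x → s x = x i

/-- Condition Δ^2. -/
def Delta2 {A : Type*} (F : ∀ n : ℕ, Set ((Fin n → A) → A)) : Prop :=
  ∀ a b : Fin 2 → A, Function.Injective a → Function.Injective b →
    Set.range a ≠ Set.range b → ∀ i j : Fin 2,
      ∃ w ∈ F 2, (∀ x : A, w (fun _ => x) = x) ∧ w a = a i ∧ w b = b j

/-- `H` weakly separates `p` from `q` at the point `a`. -/
def WeaklySeparates {A Q : Type*} (H : Set (Q → A)) (p q : Q) (a : A) : Prop :=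
  ∃ h₁ ∈ H, ∃ h₂ ∈ H, h₁ p = a ∧ h₂ p = a ∧ h₁ q ≠ h₂ q

/-- `H` strongly separates `p` from `q` at the point `a`. -/
def StronglySeparates {A Q : Type*} (H : Set (Q → A)) (p q : Q) (a : A) : Prop :=
  ∀ b ∈ valuesAt H q, ∃ h ∈ H, h p = a ∧ h q = b

/-- Every operation in `F` is conservative. -/
def IsConservative {A : Type*} (F : ∀ n : ℕ, Set ((Fin n → A) → A)) : Prop :=
  ∀ (n : ℕ), ∀ f ∈ F n, ∀ a : Fin n → A, f a ∈ Set.range a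

/-- `F` is symmetric: closed under conjugation by permutations of `A`. -/
def IsSymmetric {A : Type*} (F : ∀ n : ℕ, Set ((Fin n → A) → A)) : Prop :=
  ∀ (n : ℕ), ∀ f ∈ F n, ∀ σ : Equiv.Perm A, (fun a : Fin n → A => σ.symm (f (σ ∘ a))) ∈ F n

theorem Set.eq_pair_of_ncard_le_two {α : Type*} {s : Set α} {x y : α} (hs : s.Finite)
    (hcard : s.ncard ≤ 2) (hx : x ∈ s) (hy : y ∈ s) (hxy : x ≠ y) : s = {x, y} :=
  (Set.eq_of_subset_of_ncard_le (Set.pair_subset hx hy) (by rwa [Set.ncard_pair hxy]) hs).symm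

theorem stmt_4_general {A Q : Type*} [Finite A]
    (H : Set (Q → A))
    (hcard : ∀ q : Q, (valuesAt H q).ncard ≤ 2)
    (p q : Q) (a : A)
    (hw : WeaklySeparates H p q a) :
    StronglySeparates H p q a := by
  obtain ⟨h₁, hh₁, h₂, hh₂, hp₁, hp₂, hne⟩ := hw
  have hvalues : valuesAt H q = {h₁ q, h₂ q} :=
    Set.eq_pair_of_ncard_le_two (Set.toFinite _) (hcard q) ⟨h₁, hh₁, rfl⟩ ⟨h₂, hh₂, rfl⟩ hne
  intro b hb
  rw [hvalues] at hb
  rcases hb with rfl | rfl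
  exacts [⟨h₁, hh₁, hp₁, rfl⟩, ⟨h₂, hh₂, hp₂, rfl⟩]

theorem stmt_4 {A Q : Type*} [Finite A] [Nonempty A] [Finite Q] [Nonempty Q]
    (F : ∀ n : ℕ, Set ((Fin n → A) → A)) (hF : IsClone F)
    (d : (Fin 3 → A) → A) (hdF : d ∈ F 3) (hd : IsPartialFn d)
    (H : Set (Q → A)) (hH : ClInvariant F H)
    (hcard : ∀ q : Q, (valuesAt H q).ncard ≤ 2)
    (p q : Q) (a : A) (ha : a ∈ valuesAt H p)
    (hw : WeaklySeparates H p q a) :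
    StronglySeparates H p q a :=
  stmt_4_general H hcard p q a hw
end

section
/- Let A, Q be finite nonempty sets and F a clone on A satisfying condition Δ^∂ (for every injective triple a_0a_1a_2 in A^3 and every a ∈ {a_0,a_1,a_2}, F contains a ternary ∂-function with ∂(a_0,a_1,a_2)=a, where a ∂-function satisfies ∂(x,x,y)=∂(x,y,x)=∂(y,x,x)=x). Let H ⊆ A^Q be a Q-invariant set of F, p,q ∈ Q, a ∈ H(p). If H weakly separates p from q at a, then H strongly separates p from q at a. -/
open Function

/-
Let `h₁, h₂ ∈ H` agree with `a` at `p` but differ at `q`, and let `g ∈ H` with `g q = b`.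
If `b` is one of `h₁ q, h₂ q` we are done; otherwise `(h₁ q, h₂ q, b)` is injective, so Δ^∂
supplies a ∂-function `d` with `d (h₁ q, h₂ q, b) = b`. Applying `d` pointwise to `h₁, h₂, g`
stays in `H`, takes the value `b` at `q` and, since `h₁ p = h₂ p = a`, the value
`d (a, a, g p) = a` at `p`.
-/

theorem injective_vecThree {A : Type*} {x y z : A} (hxy : x ≠ y) (hxz : x ≠ z) (hyz : y ≠ z) :
    Injective ![x, y, z] := by
  intro i j hij
  fin_cases i <;> fin_cases j <;> simp_all [eq_comm]

theorem ClInvariant.ternary_mem {A Q : Type*} {F : ∀ n : ℕ, Set ((Fin n → A) → A)}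
    {H : Set (Q → A)} (hH : ClInvariant F H) {f : (Fin 3 → A) → A} (hf : f ∈ F 3)
    {g₀ g₁ g₂ : Q → A} (h₀ : g₀ ∈ H) (h₁ : g₁ ∈ H) (h₂ : g₂ ∈ H) :
    (fun r => f ![g₀ r, g₁ r, g₂ r]) ∈ H := by
  convert hH 3 f hf ![g₀, g₁, g₂] (fun i => by fin_cases i <;> assumption) using 3 with r
  ext i
  fin_cases i <;> rfl

theorem stmt_5_general {A Q : Type*}
    (F : ∀ n : ℕ, Set ((Fin n → A) → A)) (hΔ : DeltaPartial F)
    (H : Set (Q → A)) (hH : ClInvariant F H)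
    (p q : Q) (a : A)
    (hw : WeaklySeparates H p q a) :
    StronglySeparates H p q a := by
  obtain ⟨h₁, h₁H, h₂, h₂H, hp₁, hp₂, hne⟩ := hw
  rintro b ⟨g, gH, rfl⟩
  by_cases hb₁ : h₁ q = g q
  · exact ⟨h₁, h₁H, hp₁, hb₁⟩
  by_cases hb₂ : h₂ q = g q
  · exact ⟨h₂, h₂H, hp₂, hb₂⟩
  obtain ⟨d, hdF, hd, hdq⟩ := hΔ _ (injective_vecThree hne hb₁ hb₂) 2
  refine ⟨_, hH.ternary_mem hdF h₁H h₂H gH, ?_, hdq⟩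
  simpa only [hp₁, hp₂] using (hd a (g p)).1

theorem stmt_5 {A Q : Type*} [Finite A] [Nonempty A] [Finite Q] [Nonempty Q]
    (F : ∀ n : ℕ, Set ((Fin n → A) → A)) (hF : IsClone F) (hΔ : DeltaPartial F)
    (H : Set (Q → A)) (hH : ClInvariant F H)
    (p q : Q) (a : A) (ha : a ∈ valuesAt H p)
    (hw : WeaklySeparates H p q a) :
    StronglySeparates H p q a :=
  stmt_5_general F hΔ H hH p q a hw
end

section
/- Let A, Q be finite nonempty sets, n ≥ 3 a natural number, and F a clone on A satisfying Δ^s_n. Let H ⊆ A^Q be a Q-invariant set of F, p,q ∈ Q with |H(q)| ≥ n, and a ∈ H(p). If H weakly separates p from q at a, then H strongly separates p from q at a. -/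
/-!
Extend `h₁ q`, `h₂ q`, `b` to an injective `n`-tuple of values in `H(q)` with `h₁ q` at the
distinguished position `i` of `Δ^s_n`, and lift it to a tuple of members of `H` containing `h₁`
and `h₂`. The operation `s` that `Δ^s_n` provides for this tuple and `b`, applied pointwise, gives
a member of `H` with value `b` at `q`; at `p` its argument repeats `a` (from `h₁` and `h₂`), so it
is not injective and `s` returns its `i`-th entry, `a`.
-/

open Function

section Combinatorics

variable {A : Type*}

theorem exists_injective_fin_range_eq_apply_eq {T : Set A} {n : ℕ} (hT : T.ncard = n)
    {x : A} (hx : x ∈ T) (i : Fin n) :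
    ∃ v : Fin n → A, Injective v ∧ Set.range v = T ∧ v i = x := by
  have hcard : Nat.card T = n := by rwa [Nat.card_coe_set_eq]
  have : Finite T := Nat.finite_of_card_ne_zero (by have := i.pos; omega)
  let e : Fin n ≃ T := (Finite.equivFinOfCardEq hcard).symm
  let f : Fin n ≃ T := (Equiv.swap i (e.symm ⟨x, hx⟩)).trans e
  refine ⟨Subtype.val ∘ f, Subtype.val_injective.comp f.injective, ?_, by simp [f]⟩
  rw [f.surjective.range_comp, Subtype.range_coe]

theorem exists_injective_fin_of_le_ncard {S : Set A} {n : ℕ} (hn : 3 ≤ n) (hS : n ≤ S.ncard)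
    {x y z : A} (hx : x ∈ S) (hy : y ∈ S) (hz : z ∈ S) (i : Fin n) :
    ∃ v : Fin n → A, Injective v ∧ Set.range v ⊆ S ∧ v i = x ∧ y ∈ Set.range v ∧
      z ∈ Set.range v := by
  have hxyz : ({x, y, z} : Set A).ncard ≤ n := by
    classical
    calc ({x, y, z} : Set A).ncard = (({x, y, z} : Finset A) : Set A).ncard := by simp
      _ ≤ 3 := by rw [Set.ncard_coe_finset]; exact Finset.card_le_three
      _ ≤ n := hn
  obtain ⟨T, hxyzT, hTS, hT⟩ :=
    Set.exists_subsuperset_card_eq (Set.insert_subset hx (Set.pair_subset hy hz)) hxyz hS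
  obtain ⟨v, hv, rfl, hvi⟩ :=
    exists_injective_fin_range_eq_apply_eq hT (x := x) (hxyzT (by simp)) i
  exact ⟨v, hv, hTS, hvi, hxyzT (by simp), hxyzT (by simp)⟩

end Combinatorics

section Separation

variable {A Q : Type*}

theorem exists_section_valuesAt {H : Set (Q → A)} {q : Q} {h₁ h₂ : Q → A} (hh₁ : h₁ ∈ H)
    (hh₂ : h₂ ∈ H) (hne : h₁ q ≠ h₂ q) :
    ∃ c : A → Q → A, (∀ x ∈ valuesAt H q, c x ∈ H ∧ c x q = x) ∧
      c (h₁ q) = h₁ ∧ c (h₂ q) = h₂ := by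
  classical
  have : Nonempty (Q → A) := ⟨h₁⟩
  choose! w hwH hwq using fun x (hx : x ∈ valuesAt H q) => hx
  refine ⟨update (update w (h₁ q) h₁) (h₂ q) h₂, fun x hx => ?_, by simp [hne], by simp⟩
  by_cases hx₂ : x = h₂ q
  · subst hx₂; simpa using hh₂
  by_cases hx₁ : x = h₁ q
  · subst hx₁; simpa [hx₂] using hh₁
  simpa [hx₁, hx₂] using ⟨hwH x hx, hwq x hx⟩

theorem ClInvariant.exists_mem_of_deltaS {F : ∀ n : ℕ, Set ((Fin n → A) → A)}
    {H : Set (Q → A)} (hH : ClInvariant F H) {n : ℕ} {i : Fin n}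
    (hΔ : ∀ a : Fin n → A, Injective a → ∀ j : Fin n,
      ∃ s ∈ F n, s a = a j ∧ ∀ x : Fin n → A, ¬ Injective x → s x = x i)
    {u : Fin n → Q → A} (huH : ∀ k, u k ∈ H) {p q : Q} {a b : A}
    (hinj : Injective fun k => u k q) (hi : u i p = a) {k : Fin n} (hki : k ≠ i)
    (hk : u k p = a) (hb : b ∈ Set.range fun k => u k q) :
    ∃ h ∈ H, h p = a ∧ h q = b := by
  obtain ⟨j, rfl⟩ := hb
  obtain ⟨s, hsF, hsq, hsp⟩ := hΔ _ hinj j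
  have hp : ¬ Injective fun k => u k p := fun h => hki (h (hk.trans hi.symm))
  exact ⟨fun r => s fun k => u k r, hH n s hsF u huH, (hsp _ hp).trans hi, hsq⟩

end Separation

theorem stmt_8_general {A Q : Type*}
    (n : ℕ) (hn : 3 ≤ n)
    (F : ∀ n : ℕ, Set ((Fin n → A) → A)) (hΔ : DeltaS F n)
    (H : Set (Q → A)) (hH : ClInvariant F H)
    (p q : Q) (hq : n ≤ (valuesAt H q).ncard) (a : A)
    (hw : WeaklySeparates H p q a) :
    StronglySeparates H p q a := by
  obtain ⟨i, hΔi⟩ := hΔ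
  obtain ⟨h₁, hh₁, h₂, hh₂, hp₁, hp₂, hne⟩ := hw
  intro b hb
  obtain ⟨v, hv, hvS, hvi, ⟨k, hvk⟩, hbv⟩ :=
    exists_injective_fin_of_le_ncard (x := h₁ q) (y := h₂ q) hn hq ⟨h₁, hh₁, rfl⟩ ⟨h₂, hh₂, rfl⟩
      hb i
  obtain ⟨c, hc, hc₁, hc₂⟩ := exists_section_valuesAt hh₁ hh₂ hne
  have hcv : ∀ j, c (v j) ∈ H ∧ c (v j) q = v j := fun j => hc _ (hvS ⟨j, rfl⟩)
  have hcolumn : (fun j => (c ∘ v) j q) = v := funext fun j => (hcv j).2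
  have hki : k ≠ i := fun hki => hne (by rw [← hvi, ← hvk, hki])
  exact hH.exists_mem_of_deltaS hΔi (u := c ∘ v) (fun j => (hcv j).1) (by rwa [hcolumn])
    (by simp [hvi, hc₁, hp₁]) hki (by simp [hvk, hc₂, hp₂]) (by rwa [hcolumn])

theorem stmt_8 {A Q : Type*} [Finite A] [Nonempty A] [Finite Q] [Nonempty Q]
    (n : ℕ) (hn : 3 ≤ n)
    (F : ∀ n : ℕ, Set ((Fin n → A) → A)) (hF : IsClone F) (hΔ : DeltaS F n)
    (H : Set (Q → A)) (hH : ClInvariant F H)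
    (p q : Q) (hq : n ≤ (valuesAt H q).ncard) (a : A) (ha : a ∈ valuesAt H p)
    (hw : WeaklySeparates H p q a) :
    StronglySeparates H p q a :=
  stmt_8_general n hn F hΔ H hH p q hq a hw
end

section
/- Let n ≥ 2 and let F be a clone on a set A satisfying Δ^s_n with witness index i. Then for every index j < n, every injective n-tuple b ∈ A^n, and every b' in the range of b, there is an n-ary function t ∈ F with t(b) = b' and t(x) = x_j for every non-injective n-tuple x ∈ A^n. -/
open Function

/-! Precompose the witness of Δ^s_n for the permuted tuple `b ∘ swap i j` with the coordinate
transposition `swap i j`; this moves the default projection from `x i` to `x j`. -/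

theorem IsClone.comp_reindex {A : Type*} {F : ∀ n : ℕ, Set ((Fin n → A) → A)} (hF : IsClone F)
    {n m : ℕ} {f : (Fin n → A) → A} (hf : f ∈ F n) (τ : Fin n → Fin m) :
    (fun x => f (x ∘ τ)) ∈ F m :=
  hF.2 n m f (fun l x => x (τ l)) hf fun l => hF.1 m (τ l)

theorem stmt_9_general {A : Type*} (n : ℕ)
    (F : ∀ n : ℕ, Set ((Fin n → A) → A)) (hF : IsClone F) (i : Fin n)
    (hΔ : ∀ a : Fin n → A, Function.Injective a → ∀ j : Fin n,
      ∃ s ∈ F n, s a = a j ∧ ∀ x : Fin n → A, ¬ Function.Injective x → s x = x i) :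
    ∀ (j : Fin n) (b : Fin n → A), Function.Injective b → ∀ k : Fin n,
      ∃ t ∈ F n, t b = b k ∧ ∀ x : Fin n → A, ¬ Function.Injective x → t x = x j := by
  intro j b hb k
  set σ : Equiv.Perm (Fin n) := Equiv.swap i j
  obtain ⟨s, hsF, hsb, hs⟩ := hΔ (b ∘ σ) (hb.comp σ.injective) (σ.symm k)
  refine ⟨fun x => s (x ∘ σ), hF.comp_reindex hsF σ, by simpa using hsb, fun x hx => ?_⟩
  show s (x ∘ σ) = x j
  rw [hs _ (by rwa [Equiv.injective_comp]), comp_apply, Equiv.swap_apply_left]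

theorem stmt_9 {A : Type*} (n : ℕ) (hn : 2 ≤ n)
    (F : ∀ n : ℕ, Set ((Fin n → A) → A)) (hF : IsClone F) (i : Fin n)
    (hΔ : ∀ a : Fin n → A, Function.Injective a → ∀ j : Fin n,
      ∃ s ∈ F n, s a = a j ∧ ∀ x : Fin n → A, ¬ Function.Injective x → s x = x i) :
    ∀ (j : Fin n) (b : Fin n → A), Function.Injective b → ∀ k : Fin n,
      ∃ t ∈ F n, t b = b k ∧ ∀ x : Fin n → A, ¬ Function.Injective x → t x = x j :=
  stmt_9_general n F hF i hΔ
end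

section
/- Let F be a conservative clone on a set A (|A| ≥ 2) such that r(F) ≥ 3 (every binary function in F is a projection). Then for every n-tuple a = (a_0,...,a_{n-1}) ∈ A^n whose range has fewer than r(F) elements, every n-ary f ∈ F, and every map σ: A → A, one has f(σ(a_0),...,σ(a_{n-1})) = σ(f(a_0,...,a_{n-1})). -/
open Function

/-!
Write `a = b ∘ φ` with `b` listing the distinct values of `a`, of which there are fewer than `r`.
Identifying the variables of `f` along `φ` gives a member of `F` of arity `< r`, hence a
projection onto some coordinate `j`; so both `f a` and `f (σ ∘ a)` are read off at `j`, namely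
`b j` and `σ (b j)`.
-/

theorem IsClone.minor_mem {A : Type*} {F : ∀ n : ℕ, Set ((Fin n → A) → A)} (hF : IsClone F)
    {n k : ℕ} {f : (Fin n → A) → A} (hf : f ∈ F n) (φ : Fin n → Fin k) :
    (fun x : Fin k → A => f (x ∘ φ)) ∈ F k :=
  hF.2 n k f (fun i x => x (φ i)) hf fun i => hF.1 k (φ i)

theorem exists_eq_comp_fin_ncard_range {A : Type*} {n : ℕ} (a : Fin n → A) :
    ∃ (b : Fin (Set.range a).ncard → A) (φ : Fin n → Fin (Set.range a).ncard), a = b ∘ φ := by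
  let e : Set.range a ≃ Fin (Set.range a).ncard := Finite.equivFin _
  exact ⟨Subtype.val ∘ e.symm, e ∘ Set.rangeFactorization a, by
    ext i; simp [Set.rangeFactorization]⟩

theorem comp_comm_of_minor_eq_proj {A : Type*} {n k : ℕ} {f : (Fin n → A) → A}
    {φ : Fin n → Fin k} {j : Fin k} (hf : (fun x => f (x ∘ φ)) = fun x => x j)
    (b : Fin k → A) (σ : A → A) : f (σ ∘ b ∘ φ) = σ (f (b ∘ φ)) := by
  have hf' : ∀ x, f (x ∘ φ) = x j := congrFun hf
  rw [← Function.comp_assoc, hf', hf', Function.comp_apply]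

theorem stmt_10_general {A : Type*}
    (F : ∀ n : ℕ, Set ((Fin n → A) → A)) (hF : IsClone F)
    (r : ℕ)
    -- r(F) ≥ r : every function in F of arity < r is a projection
    (hproj : ∀ m : ℕ, m < r → ∀ f ∈ F m, ∃ i : Fin m, f = fun x => x i) :
    ∀ (n : ℕ) (a : Fin n → A), (Set.range a).ncard < r →
      ∀ f ∈ F n, ∀ σ : A → A, f (σ ∘ a) = σ (f a) := by
  intro n a hcard f hf σ
  obtain ⟨b, φ, ha⟩ := exists_eq_comp_fin_ncard_range a
  obtain ⟨j, hj⟩ := hproj _ hcard _ (hF.minor_mem hf φ)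
  rw [ha]
  exact comp_comm_of_minor_eq_proj hj b σ

theorem stmt_10 {A : Type*} [Nontrivial A]
    (F : ∀ n : ℕ, Set ((Fin n → A) → A)) (hF : IsClone F) (hcons : IsConservative F)
    (r : ℕ) (hr : 3 ≤ r)
    -- r(F) ≥ r : every function in F of arity < r is a projection
    (hproj : ∀ m : ℕ, m < r → ∀ f ∈ F m, ∃ i : Fin m, f = fun x => x i) :
    ∀ (n : ℕ) (a : Fin n → A), (Set.range a).ncard < r →
      ∀ f ∈ F n, ∀ σ : A → A, f (σ ∘ a) = σ (f a) :=
  stmt_10_general F hF r hproj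
end

section
/- Let F be a conservative clone on a finite set A with |A| ≥ 2 and r(F) = r ≥ 4. Then every n-ary function f ∈ F coincides with some projection on the set of all n-tuples whose range has fewer than r elements. -/
open Function

/-!
Identifying the variables of an `n`-ary `f ∈ F` along `e : Fin n → Fin (r - 1)` gives an
`(r - 1)`-ary member of `F`, hence a projection onto some coordinate `k e`; since `A` is
nontrivial this coordinate is unique, so `k` commutes with every self-map of `Fin (r - 1)`.
As in the ultrafilter proof of Arrow's theorem, the sets `S ⊆ Fin n` on whose two-valued
indicator `k` takes the value inside `S` form an ultrafilter; this needs tuples with three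
distinct values, which is where `r ≥ 4` enters. On a finite set the ultrafilter is principal, at
some `i`, and then `k e = e i` for every `e`. Finally, a tuple with fewer than `r` values
factors through some `e`.
-/

open Set

theorem IsClone.precomp_mem {A : Type*} {F : ∀ n : ℕ, Set ((Fin n → A) → A)} (hF : IsClone F)
    {n m : ℕ} {f : (Fin n → A) → A} (hf : f ∈ F n) (e : Fin n → Fin m) :
    (fun x : Fin m → A => f (x ∘ e)) ∈ F m :=
  hF.2 n m f (fun i x => x (e i)) hf fun i => hF.1 m (e i)

theorem eq_of_forall_apply_eq {A β : Type*} [Nontrivial A] {j j' : β}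
    (h : ∀ x : β → A, x j = x j') : j = j' := by
  classical
  obtain ⟨u, v, huv⟩ := exists_pair_ne A
  by_contra hne
  simpa [Ne.symm hne, huv] using h fun y => if y = j then u else v

theorem exists_comp_eq_of_ncard_range_le {ι A : Type*} [Finite ι] [Nonempty A] {m : ℕ}
    {a : ι → A} (h : (range a).ncard ≤ m) : ∃ (b : Fin m → A) (e : ι → Fin m), a = b ∘ e := by
  classical
  let φ : range a ↪ Fin m := (Finite.equivFin (range a)).toEmbedding.trans
    (Fin.castLEEmb (by rwa [Nat.card_coe_set_eq]))
  refine ⟨extend φ Subtype.val fun _ => Classical.arbitrary A,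
    φ ∘ rangeFactorization a, funext fun i => ?_⟩
  simp [φ.injective.extend_apply, rangeFactorization_coe]

def CommutesWithMaps {ι B : Type*} (k : (ι → B) → B) : Prop :=
  ∀ (σ : B → B) (e : ι → B), k (σ ∘ e) = σ (k e)

open Classical in
def decisiveSets {ι B : Type*} (k : (ι → B) → B) (b₀ b₁ : B) : Set (Set ι) :=
  {S | k (S.piecewise (fun _ => b₀) fun _ => b₁) = b₀}

namespace CommutesWithMaps

variable {ι B : Type*} {k : (ι → B) → B} {b₀ b₁ b₂ : B}

theorem apply_mem_range [Nontrivial B] (hk : CommutesWithMaps k) (e : ι → B) :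
    k e ∈ range e := by
  classical
  by_contra h
  obtain ⟨d, hd⟩ := exists_ne (k e)
  have hσ : (fun y => if y ∈ range e then y else d) ∘ e = e := by
    funext i; simp
  have := hk (fun y => if y ∈ range e then y else d) e
  rw [hσ, if_neg h] at this
  exact hd this.symm

theorem fiber_mem_decisiveSets_iff (hk : CommutesWithMaps k) (h₀₁ : b₀ ≠ b₁) (e : ι → B)
    (c : B) : {i | e i = c} ∈ decisiveSets k b₀ b₁ ↔ k e = c := by
  classical
  have hσ : ({i | e i = c} : Set ι).piecewise (fun _ => b₀) (fun _ => b₁)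
      = (fun y => if y = c then b₀ else b₁) ∘ e := by
    funext i; simp [piecewise]
  simp only [decisiveSets, mem_ofPred_eq, hσ, hk _ e]
  split_ifs with h
  · simpa
  · simpa [h] using h₀₁.symm

theorem exists_mem_decisiveSets_iff (hk : CommutesWithMaps k) (h₀₁ : b₀ ≠ b₁)
    (h₀₂ : b₀ ≠ b₂) (h₁₂ : b₁ ≠ b₂) (S T : Set ι) :
    ∃ c ∈ ({b₀, b₁, b₂} : Set B), (S ∈ decisiveSets k b₀ b₁ ↔ c = b₀) ∧
      (T \ S ∈ decisiveSets k b₀ b₁ ↔ c = b₁) ∧ ((S ∪ T)ᶜ ∈ decisiveSets k b₀ b₁ ↔ c = b₂) := by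
  classical
  have := nontrivial_of_ne b₀ b₁ h₀₁
  set e : ι → B := fun i => if i ∈ S then b₀ else if i ∈ T then b₁ else b₂
  have fiber (c : B) (R : Set ι) (hR : ∀ i, e i = c ↔ i ∈ R) :
      R ∈ decisiveSets k b₀ b₁ ↔ k e = c := by
    rw [← fiber_mem_decisiveSets_iff hk h₀₁ e c]
    exact iff_of_eq (congrArg _ (ext fun i => (hR i).symm))
  refine ⟨k e, ?_, fiber _ _ fun i => ?_, fiber _ _ fun i => ?_, fiber _ _ fun i => ?_⟩
  · obtain ⟨i, hi⟩ := hk.apply_mem_range e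
    rw [← hi]
    by_cases hiS : i ∈ S <;> by_cases hiT : i ∈ T <;> simp [e, hiS, hiT]
  all_goals
    by_cases hiS : i ∈ S <;> by_cases hiT : i ∈ T <;>
      simp [e, hiS, hiT, h₀₁, h₀₂, h₁₂, h₀₁.symm, h₀₂.symm, h₁₂.symm]

theorem not_disjoint_of_mem_decisiveSets (hk : CommutesWithMaps k) (h₀₁ : b₀ ≠ b₁)
    (h₀₂ : b₀ ≠ b₂) (h₁₂ : b₁ ≠ b₂) {S T : Set ι} (hS : S ∈ decisiveSets k b₀ b₁)
    (hT : T ∈ decisiveSets k b₀ b₁) : ¬Disjoint S T := by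
  intro hST
  obtain ⟨c, -, hcS, hcT, -⟩ := exists_mem_decisiveSets_iff hk h₀₁ h₀₂ h₁₂ S T
  rw [hST.symm.sdiff_eq_left] at hcT
  exact h₀₁ ((hcS.1 hS).symm.trans (hcT.1 hT))

theorem mem_or_compl_mem_decisiveSets (hk : CommutesWithMaps k) (h₀₁ : b₀ ≠ b₁)
    (h₀₂ : b₀ ≠ b₂) (h₁₂ : b₁ ≠ b₂) (S : Set ι) :
    S ∈ decisiveSets k b₀ b₁ ∨ Sᶜ ∈ decisiveSets k b₀ b₁ := by
  obtain ⟨c, hc, hcS, hcE, hcSc⟩ := exists_mem_decisiveSets_iff hk h₀₁ h₀₂ h₁₂ S ∅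
  rw [empty_sdiff] at hcE
  rw [union_empty] at hcSc
  rcases hc with rfl | rfl | rfl
  · exact .inl (hcS.2 rfl)
  · exact absurd (disjoint_empty ∅)
      (not_disjoint_of_mem_decisiveSets hk h₀₁ h₀₂ h₁₂ (hcE.2 rfl) (hcE.2 rfl))
  · exact .inr (hcSc.2 rfl)

theorem inter_mem_decisiveSets (hk : CommutesWithMaps k) (h₀₁ : b₀ ≠ b₁)
    (h₀₂ : b₀ ≠ b₂) (h₁₂ : b₁ ≠ b₂) {S T : Set ι} (hS : S ∈ decisiveSets k b₀ b₁)
    (hT : T ∈ decisiveSets k b₀ b₁) : S ∩ T ∈ decisiveSets k b₀ b₁ := by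
  obtain ⟨c, hc, hcST, hcSc, hcSdT⟩ := exists_mem_decisiveSets_iff hk h₀₁ h₀₂ h₁₂ (S ∩ T) Sᶜ
  have h₁ : Sᶜ \ (S ∩ T) = Sᶜ := by ext; simp +contextual
  have h₂ : (S ∩ T ∪ Sᶜ)ᶜ = S \ T := by ext; simp; tauto
  rw [h₁] at hcSc
  rw [h₂] at hcSdT
  rcases hc with rfl | rfl | rfl
  · exact hcST.2 rfl
  · exact absurd disjoint_compl_right
      (not_disjoint_of_mem_decisiveSets hk h₀₁ h₀₂ h₁₂ hS (hcSc.2 rfl))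
  · exact absurd disjoint_sdiff_left
      (not_disjoint_of_mem_decisiveSets hk h₀₁ h₀₂ h₁₂ (hcSdT.2 rfl) hT)

theorem exists_decisiveSets_eq [Finite ι] (hk : CommutesWithMaps k) (h₀₁ : b₀ ≠ b₁)
    (h₀₂ : b₀ ≠ b₂) (h₁₂ : b₁ ≠ b₂) : ∃ i, decisiveSets k b₀ b₁ = {S | i ∈ S} := by
  have notMem_of_compl_mem {S : Set ι} (hS : Sᶜ ∈ decisiveSets k b₀ b₁) :
      S ∉ decisiveSets k b₀ b₁ := fun hS' =>
    not_disjoint_of_mem_decisiveSets hk h₀₁ h₀₂ h₁₂ hS' hS disjoint_compl_right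
  let U : Ultrafilter ι := .ofComplNotMemIff
    { sets := decisiveSets k b₀ b₁
      univ_sets := compl_empty (α := ι) ▸
        (mem_or_compl_mem_decisiveSets hk h₀₁ h₀₂ h₁₂ ∅).resolve_left fun h =>
          not_disjoint_of_mem_decisiveSets hk h₀₁ h₀₂ h₁₂ h h (disjoint_empty ∅)
      sets_of_superset := fun {S T} hS hST =>
        (mem_or_compl_mem_decisiveSets hk h₀₁ h₀₂ h₁₂ T).resolve_right fun hT =>
          not_disjoint_of_mem_decisiveSets hk h₀₁ h₀₂ h₁₂ hS hT
            (disjoint_compl_right.mono_left hST)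
      inter_sets := inter_mem_decisiveSets hk h₀₁ h₀₂ h₁₂ }
    fun S => ⟨(mem_or_compl_mem_decisiveSets hk h₀₁ h₀₂ h₁₂ S).resolve_right,
      fun hS hSc => notMem_of_compl_mem hSc hS⟩
  obtain ⟨i, hi⟩ := U.eq_pure_of_finite
  exact ⟨i, ext fun S => (congrArg (S ∈ ·) hi).to_iff.trans Ultrafilter.mem_pure⟩

theorem exists_eq_apply [Finite ι] (hk : CommutesWithMaps k) (h₀₁ : b₀ ≠ b₁)
    (h₀₂ : b₀ ≠ b₂) (h₁₂ : b₁ ≠ b₂) : ∃ i, ∀ e : ι → B, k e = e i := by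
  obtain ⟨i, hi⟩ := exists_decisiveSets_eq hk h₀₁ h₀₂ h₁₂
  refine ⟨i, fun e => ?_⟩
  have := (fiber_mem_decisiveSets_iff hk h₀₁ e (k e)).2 rfl
  rw [hi] at this
  exact this.symm

end CommutesWithMaps

theorem exists_forall_comp_eq_apply {ι A B : Type*} [Finite ι] [Nontrivial A]
    {f : (ι → A) → A} {b₀ b₁ b₂ : B} (h₀₁ : b₀ ≠ b₁) (h₀₂ : b₀ ≠ b₂) (h₁₂ : b₁ ≠ b₂)
    (hf : ∀ e : ι → B, ∃ j, ∀ x : B → A, f (x ∘ e) = x j) :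
    ∃ i, ∀ (e : ι → B) (x : B → A), f (x ∘ e) = x (e i) := by
  choose k hk using hf
  have hnat : CommutesWithMaps k := fun σ e =>
    eq_of_forall_apply_eq (A := A) fun x => (hk (σ ∘ e) x).symm.trans (hk e (x ∘ σ))
  obtain ⟨i, hi⟩ := hnat.exists_eq_apply h₀₁ h₀₂ h₁₂
  exact ⟨i, fun e x => by rw [hk, hi]⟩

theorem stmt_11_general {A : Type*} [Nontrivial A]
    (F : ∀ n : ℕ, Set ((Fin n → A) → A)) (hF : IsClone F)
    (r : ℕ) (hr : 4 ≤ r)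
    -- r(F) = r : every function in F of arity < r is a projection,
    (hproj : ∀ m : ℕ, m < r → ∀ f ∈ F m, ∃ i : Fin m, f = fun x => x i) :
    ∀ (n : ℕ), ∀ f ∈ F n, ∃ i : Fin n, ∀ a : Fin n → A,
      (Set.range a).ncard < r → f a = a i := by
  intro n f hf
  have hminor (e : Fin n → Fin (r - 1)) : ∃ j, ∀ x : Fin (r - 1) → A, f (x ∘ e) = x j :=
    (hproj (r - 1) (by omega) _ (hF.precomp_mem hf e)).imp fun j hj => congrFun hj
  obtain ⟨i, hi⟩ := exists_forall_comp_eq_apply (b₀ := (⟨0, by omega⟩ : Fin (r - 1)))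
    (b₁ := ⟨1, by omega⟩) (b₂ := ⟨2, by omega⟩) (by simp) (by simp) (by simp) hminor
  refine ⟨i, fun a ha => ?_⟩
  obtain ⟨b, e, rfl⟩ := exists_comp_eq_of_ncard_range_le (m := r - 1) (a := a) (by omega)
  exact hi e b

theorem stmt_11 {A : Type*} [Finite A] [Nontrivial A]
    (F : ∀ n : ℕ, Set ((Fin n → A) → A)) (hF : IsClone F) (hcons : IsConservative F)
    (r : ℕ) (hr : 4 ≤ r)
    -- r(F) = r : every function in F of arity < r is a projection,
    -- and F contains an r-ary function that is not a projection
    (hproj : ∀ m : ℕ, m < r → ∀ f ∈ F m, ∃ i : Fin m, f = fun x => x i)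
    (hex : ∃ g ∈ F r, ¬ ∃ i : Fin r, g = fun x : Fin r → A => x i) :
    ∀ (n : ℕ), ∀ f ∈ F n, ∃ i : Fin n, ∀ a : Fin n → A,
      (Set.range a).ncard < r → f a = a i :=
  stmt_11_general F hF r hr hproj
end

section
/- Let F be a conservative symmetric clone on a set A and n a natural number. If F contains an n-ary function f that is not a projection but coincides with some projection on all non-injective n-tuples, then F satisfies Δ^s_n: there is an i < n such that for every injective n-tuple a ∈ A^n and every a' in its range, F contains an n-ary s with s(a)=a' and s(x)=x_i for all non-injective x. -/
open Function

/-
Say `f ∈ F` agrees with the projection `xᵢ` off the injective tuples but `f b = b k` with `k ≠ i`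
for some injective `b` (conservativity provides `k`). Given an injective `a` and `j ≠ i`,
permute the arguments of `f` by the transposition `(k j)`, which fixes `i`, and conjugate by a
permutation `σ` of `A` sending `a ∘ (k j)` to `b`. The result still projects to `xᵢ` off the
injective tuples, since neither operation changes injectivity, and it sends `a` to `a j`.
-/

section

variable {A : Type*} {F : ∀ n : ℕ, Set ((Fin n → A) → A)}

theorem IsClone.comp_mem (hF : IsClone F) {n m : ℕ} {f : (Fin n → A) → A} (hf : f ∈ F n)
    (ρ : Fin n → Fin m) : (fun x : Fin m → A => f (x ∘ ρ)) ∈ F m :=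
  hF.2 n m f (fun k x => x (ρ k)) hf fun k => hF.1 m (ρ k)

theorem IsSymmetric.conj_comp_mem (hsym : IsSymmetric F) (hF : IsClone F) {n : ℕ}
    {f : (Fin n → A) → A} (hf : f ∈ F n) (σ : Equiv.Perm A) (π : Equiv.Perm (Fin n)) :
    (fun x : Fin n → A => σ.symm (f (σ ∘ x ∘ π))) ∈ F n :=
  hsym n _ (hF.comp_mem hf π) σ

theorem exists_mem_apply_eq_of_apply_ne_proj (hF : IsClone F) (hsym : IsSymmetric F) {n : ℕ}
    {f : (Fin n → A) → A} (hf : f ∈ F n) {i : Fin n}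
    (hfi : ∀ x : Fin n → A, ¬ Injective x → f x = x i)
    {b : Fin n → A} {k : Fin n} (hbk : f b = b k) (hbi : f b ≠ b i)
    {a : Fin n → A} (ha : Injective a) {j : Fin n} (hji : j ≠ i) :
    ∃ s ∈ F n, s a = a j ∧ ∀ x : Fin n → A, ¬ Injective x → s x = x i := by
  have hb : Injective b := not_not.mp fun h => hbi (hfi b h)
  have hki : k ≠ i := by rintro rfl; exact hbi hbk
  set π := Equiv.swap k j
  have hπi : π i = i := Equiv.swap_apply_of_ne_of_ne hki.symm hji.symm
  obtain ⟨σ, hσ⟩ := Equiv.Perm.exists_extending_pair (a ∘ π) b (ha.comp π.injective) hb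
  have hσa : σ ∘ a ∘ π = b := funext hσ
  refine ⟨_, hsym.conj_comp_mem hF hf σ π, ?_, fun x hx => ?_⟩
  · simp only [hσa, hbk, ← hσ k, comp_apply, Equiv.symm_apply_apply, π, Equiv.swap_apply_left]
  · have hσx : ¬ Injective (σ ∘ x ∘ π) := by
      rwa [EquivLike.comp_injective, EquivLike.injective_comp]
    simp only [hfi _ hσx, comp_apply, hπi, Equiv.symm_apply_apply]

end

theorem stmt_12 {A : Type*}
    (F : ∀ n : ℕ, Set ((Fin n → A) → A)) (hF : IsClone F)
    (hcons : IsConservative F) (hsym : IsSymmetric F) (n : ℕ)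
    (hex : ∃ f ∈ F n, (¬ ∃ i : Fin n, f = fun x : Fin n → A => x i) ∧
      ∃ i : Fin n, ∀ x : Fin n → A, ¬ Function.Injective x → f x = x i) :
    DeltaS F n := by
  obtain ⟨f, hf, hnotproj, i, hfi⟩ := hex
  refine ⟨i, fun a ha j => ?_⟩
  by_cases hji : j = i
  · exact ⟨fun x => x i, hF.1 n i, by rw [hji], fun _ _ => rfl⟩
  obtain ⟨b, hbi⟩ : ∃ b, f b ≠ b i := not_forall.mp fun h => hnotproj ⟨i, funext h⟩
  obtain ⟨k, hbk⟩ := hcons n f hf b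
  exact exists_mem_apply_eq_of_apply_ne_proj hF hsym hf hfi hbk.symm hbi ha hji
end

section
/- Let F be a conservative symmetric clone on a set A. If F contains an ℓ-function, i.e. a ternary function ℓ with ℓ(x,y,y)=ℓ(y,x,y)=ℓ(y,y,x)=x for all x,y, then F satisfies Δ^s_3: there is i < 3 such that for every injective triple a ∈ A^3 and every a' in its range, F contains a ternary s with s(a)=a' and s(x)=x_i for all non-injective triples x. -/
open Function

/-! The ℓ-function `m` is a minority operation. By conservativity `m a = a k` for some `k`;
conjugating `m` by the transposition `(a k, a r)` and permuting its arguments by `(k, r)` gives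
a minority `f ∈ F` with `f a = a r`, for any prescribed `r`. Take `i = 0`. For `j = 0` the
projection works. For `j ≠ 0` let `k` be the remaining index and choose `f` with `f a = a k`;
then `s x = m (x j, x k, f x)` gives `s a = m (a j, a k, a k) = a j`, and on a non-injective `x`
the minority `f` returns the odd coordinate, which makes `s x = x 0` in each of the three
patterns. -/

section Minority

variable {A : Type*} {n : ℕ}

def IsMinority (m : (Fin n → A) → A) : Prop :=
  ∀ (p : Fin n) (x y : A), m (update (fun _ => y) p x) = x

theorem isMinority_fin_three_iff {m : (Fin 3 → A) → A} :
    IsMinority m ↔ ∀ x y : A, m ![x, y, y] = x ∧ m ![y, x, y] = x ∧ m ![y, y, x] = x := by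
  have h₀ (x y : A) : ![x, y, y] = update (fun _ => y) 0 x := by ext i; fin_cases i <;> rfl
  have h₁ (x y : A) : ![y, x, y] = update (fun _ => y) 1 x := by ext i; fin_cases i <;> rfl
  have h₂ (x y : A) : ![y, y, x] = update (fun _ => y) 2 x := by ext i; fin_cases i <;> rfl
  simp only [h₀, h₁, h₂]
  exact ⟨fun hm x y => ⟨hm 0 x y, hm 1 x y, hm 2 x y⟩,
    fun hm p x y => by fin_cases p <;> simp [hm]⟩

theorem IsMinority.conj {m : (Fin n → A) → A} (hm : IsMinority m) (σ : Equiv.Perm A) :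
    IsMinority fun x => σ.symm (m (σ ∘ x)) := by
  intro p x y
  simp only [comp_update]
  exact σ.symm_apply_eq.2 (hm p (σ x) (σ y))

theorem IsMinority.comp_perm {m : (Fin n → A) → A} (hm : IsMinority m)
    (π : Equiv.Perm (Fin n)) : IsMinority fun x => m (x ∘ π) := by
  intro p x y
  show m (update _ p x ∘ π) = x
  rw [update_comp_equiv]
  exact hm _ x y

theorem exists_eq_vec_of_not_injective {x : Fin 3 → A} (hx : ¬Injective x) :
    ∃ u v, x = ![u, v, v] ∨ x = ![v, u, v] ∨ x = ![v, v, u] := by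
  by_cases h₁₂ : x 1 = x 2
  · exact ⟨x 0, x 1, Or.inl (by ext i; fin_cases i <;> simp [h₁₂])⟩
  by_cases h₀₂ : x 0 = x 2
  · exact ⟨x 1, x 0, Or.inr (Or.inl (by ext i; fin_cases i <;> simp [h₀₂]))⟩
  by_cases h₀₁ : x 0 = x 1
  · exact ⟨x 2, x 0, Or.inr (Or.inr (by ext i; fin_cases i <;> simp [h₀₁]))⟩
  exact absurd (fun i j hij => by fin_cases i <;> fin_cases j <;> simp_all) hx

theorem IsMinority.apply_vec_eq_zero {m f : (Fin 3 → A) → A} (hm : IsMinority m)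
    (hf : IsMinority f) {j k : Fin 3} (hj : j ≠ 0) (hk : k ≠ 0) (hjk : j ≠ k)
    {x : Fin 3 → A} (hx : ¬Injective x) : m ![x j, x k, f x] = x 0 := by
  have hm := isMinority_fin_three_iff.1 hm
  have hf := isMinority_fin_three_iff.1 hf
  obtain ⟨u, v, rfl | rfl | rfl⟩ := exists_eq_vec_of_not_injective hx <;>
    fin_cases j <;> fin_cases k <;> simp_all

namespace IsClone

variable {F : ∀ n : ℕ, Set ((Fin n → A) → A)}

theorem comp_perm (hF : IsClone F) {f : (Fin n → A) → A} (hf : f ∈ F n)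
    (π : Equiv.Perm (Fin n)) : (fun x => f (x ∘ π)) ∈ F n :=
  hF.2 n n f (fun i x => x (π i)) hf fun i => hF.1 n (π i)

theorem comp_vec_three (hF : IsClone F) {f : (Fin 3 → A) → A} {g₀ g₁ g₂ : (Fin n → A) → A}
    (hf : f ∈ F 3) (h₀ : g₀ ∈ F n) (h₁ : g₁ ∈ F n) (h₂ : g₂ ∈ F n) :
    (fun x => f ![g₀ x, g₁ x, g₂ x]) ∈ F n := by
  convert hF.2 3 n f ![g₀, g₁, g₂] hf (fun i => by fin_cases i <;> assumption) using 3 with x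
  ext i; fin_cases i <;> rfl

end IsClone

theorem exists_isMinority_apply_eq {F : ∀ n : ℕ, Set ((Fin n → A) → A)} (hF : IsClone F)
    (hcons : IsConservative F) (hsym : IsSymmetric F) {m : (Fin n → A) → A} (hmF : m ∈ F n)
    (hm : IsMinority m) {a : Fin n → A} (ha : Injective a) (r : Fin n) :
    ∃ f ∈ F n, IsMinority f ∧ f a = a r := by
  classical
  obtain ⟨k, hk⟩ := hcons n m hmF a
  set σ := Equiv.swap (a k) (a r)
  set π := Equiv.swap k r
  have hσπ : σ ∘ (a ∘ π) = a := by
    ext i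
    simp only [comp_apply, σ, π, ha.map_swap, Equiv.swap_apply_self]
  refine ⟨fun x => σ.symm (m (σ ∘ (x ∘ π))), hF.comp_perm (hsym n m hmF σ) π,
    (hm.conj σ).comp_perm π, ?_⟩
  simp only [hσπ, ← hk, σ, Equiv.symm_swap, Equiv.swap_apply_left]

end Minority

theorem stmt_14 {A : Type*}
    (F : ∀ n : ℕ, Set ((Fin n → A) → A)) (hF : IsClone F)
    (hcons : IsConservative F) (hsym : IsSymmetric F)
    (hex : ∃ l ∈ F 3, ∀ x y : A, l ![x, y, y] = x ∧ l ![y, x, y] = x ∧ l ![y, y, x] = x) :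
    DeltaS F 3 := by
  obtain ⟨m, hmF, hm⟩ := hex
  replace hm : IsMinority m := isMinority_fin_three_iff.2 hm
  refine ⟨0, fun a ha j => ?_⟩
  suffices ∀ j k : Fin 3, j ≠ 0 → k ≠ 0 → j ≠ k →
      ∃ s ∈ F 3, s a = a j ∧ ∀ x : Fin 3 → A, ¬Injective x → s x = x 0 by
    fin_cases j
    · exact ⟨fun x => x 0, hF.1 3 0, rfl, fun _ _ => rfl⟩
    · exact this 1 2 (by decide) (by decide) (by decide)
    · exact this 2 1 (by decide) (by decide) (by decide)
  intro j k hj hk hjk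
  obtain ⟨f, hfF, hf, hfa⟩ := exists_isMinority_apply_eq hF hcons hsym hmF hm ha k
  refine ⟨fun x => m ![x j, x k, f x], hF.comp_vec_three hmF (hF.1 3 j) (hF.1 3 k) hfF, ?_,
    fun x hx => hm.apply_vec_eq_zero hf hj hk hjk hx⟩
  simp only [hfa]
  exact (isMinority_fin_three_iff.1 hm (a j) (a k)).1
end

section
/- Let F be a conservative symmetric clone on a set A, and define ⊳_i (i=0,1) on injective pairs by a ⊳_i b iff every binary f ∈ F with f(a)=a_i satisfies f(b)=b_i. Then ⊳_0 = ⊳_1, and this common relation is symmetric: a ⊳_0 b iff b ⊳_0 a; moreover it coincides with the relation R_2(F) defined by (a,b) ∈ R_2(F) iff there is a permutation σ of A with f(b) = σ(f(a)) for all binary f ∈ F. -/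
/-! Conjugation by a permutation `σ` of `A` transports `⊳ᵢ`, so `a ⊳ᵢ σa` propagates along the
orbit: `σa ⊳ᵢ σ²a ⊳ᵢ ⋯`. Choosing `σ` of finite order with `σa = b` closes the orbit and gives
`b ⊳ᵢ a`. Since a conservative binary operation sends an injective pair `a` to exactly one of
`a 0`, `a 1`, `a ⊳₁ b` is the contrapositive of `b ⊳₀ a`. So `a ⊳₀ b` holds iff every `f` picks
corresponding coordinates of `a` and `b`, i.e. iff any `σ` with `σa = b` intertwines `F 2`. -/

open Function

/-- The relation ⊳_i on pairs (encoded as `Fin 2 → A`). -/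
def Rhd {A : Type*} (F : ∀ n : ℕ, Set ((Fin n → A) → A)) (i : Fin 2)
    (a b : Fin 2 → A) : Prop :=
  ∀ f ∈ F 2, f a = a i → f b = b i

theorem Equiv.Perm.exists_isOfFinOrder_extending_pair {ι β : Type*} [Finite ι] {f g : ι → β}
    (hf : Injective f) (hg : Injective g) : ∃ σ : Perm β, IsOfFinOrder σ ∧ σ ∘ f = g := by
  classical
  let S : Set β := Set.range f ∪ Set.range g
  have : Finite S := ((Set.finite_range f).union (Set.finite_range g)).to_subtype
  obtain ⟨τ, hτ⟩ := exists_extending_pair (fun i => (⟨f i, .inl ⟨i, rfl⟩⟩ : S))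
    (fun i => (⟨g i, .inr ⟨i, rfl⟩⟩ : S)) (fun _ _ h => hf (congrArg Subtype.val h))
    (fun _ _ h => hg (congrArg Subtype.val h))
  refine ⟨ofSubtype τ, ofSubtype.isOfFinOrder (isOfFinOrder_of_finite τ), funext fun i => ?_⟩
  simp [ofSubtype_apply_of_mem τ (Or.inl ⟨i, rfl⟩ : f i ∈ S), hτ i]

section Rhd

variable {A : Type*} {F : ∀ n : ℕ, Set ((Fin n → A) → A)} {i : Fin 2} {x y z a b : Fin 2 → A}

theorem Rhd.refl (x : Fin 2 → A) : Rhd F i x x :=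
  fun _ _ h => h

theorem Rhd.trans (hxy : Rhd F i x y) (hyz : Rhd F i y z) : Rhd F i x z :=
  fun f hf hfx => hyz f hf (hxy f hf hfx)

theorem Rhd.perm_comp (hsym : IsSymmetric F) (σ : Equiv.Perm A) (h : Rhd F i x y) :
    Rhd F i (σ ∘ x) (σ ∘ y) := by
  intro f hf hfx
  have hconj : σ.symm (f (σ ∘ y)) = y i :=
    h _ (hsym 2 f hf σ) (by simp [hfx])
  simpa using congrArg σ hconj

theorem Rhd.perm_comp_pow (hsym : IsSymmetric F) {σ : Equiv.Perm A} (h : Rhd F i x (σ ∘ x)) :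
    ∀ n : ℕ, Rhd F i (σ ∘ x) (⇑(σ ^ (n + 1)) ∘ x)
  | 0 => by rw [zero_add, pow_one]; exact Rhd.refl _
  | n + 1 => (h.perm_comp_pow hsym n).trans <| by
      simpa [pow_succ, comp_assoc] using h.perm_comp hsym (σ ^ (n + 1))

theorem Rhd.symm_of_isOfFinOrder (hsym : IsSymmetric F) {σ : Equiv.Perm A}
    (hσ : IsOfFinOrder σ) (h : Rhd F i x (σ ∘ x)) : Rhd F i (σ ∘ x) x := by
  obtain ⟨n, hn, hσn⟩ := hσ.exists_pow_eq_one
  obtain ⟨m, rfl⟩ := Nat.exists_eq_add_one_of_ne_zero hn.ne'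
  simpa [hσn] using h.perm_comp_pow hsym m

theorem rhd_comm (hsym : IsSymmetric F) (ha : Injective a) (hb : Injective b) :
    Rhd F i a b ↔ Rhd F i b a := by
  suffices key : ∀ {a b : Fin 2 → A}, Injective a → Injective b → Rhd F i a b → Rhd F i b a from
    ⟨key ha hb, key hb ha⟩
  intro a b ha hb h
  obtain ⟨σ, hσ, rfl⟩ := Equiv.Perm.exists_isOfFinOrder_extending_pair ha hb
  exact h.symm_of_isOfFinOrder hsym hσ

theorem apply_eq_one_iff_ne_zero (hcons : IsConservative F) {f : (Fin 2 → A) → A} (hf : f ∈ F 2)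
    (hx : Injective x) : f x = x 1 ↔ f x ≠ x 0 := by
  obtain ⟨j, hj⟩ := hcons 2 f hf x
  have hx01 : x 0 ≠ x 1 := hx.ne (by decide)
  fin_cases j <;> simp [← hj, hx01, hx01.symm]

theorem rhd_one_iff_rhd_zero (hcons : IsConservative F) (ha : Injective a) (hb : Injective b) :
    Rhd F 1 a b ↔ Rhd F 0 b a := by
  refine forall₂_congr fun f hf => ?_
  rw [apply_eq_one_iff_ne_zero hcons hf ha, apply_eq_one_iff_ne_zero hcons hf hb, not_imp_not]

theorem exists_perm_of_rhd (hcons : IsConservative F) (ha : Injective a) (hb : Injective b)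
    (h₀ : Rhd F 0 a b) (h₁ : Rhd F 1 a b) : ∃ σ : Equiv.Perm A, ∀ f ∈ F 2, f b = σ (f a) := by
  obtain ⟨σ, hσ⟩ := Equiv.Perm.exists_extending_pair a b ha hb
  refine ⟨σ, fun f hf => ?_⟩
  by_cases hfa : f a = a 0
  · rw [hfa, hσ, h₀ f hf hfa]
  · have hfa₁ := (apply_eq_one_iff_ne_zero hcons hf ha).mpr hfa
    rw [hfa₁, hσ, h₁ f hf hfa₁]

theorem rhd_of_exists_perm (hF : IsClone F) (h : ∃ σ : Equiv.Perm A, ∀ f ∈ F 2, f b = σ (f a)) :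
    Rhd F i a b := by
  obtain ⟨σ, hσ⟩ := h
  intro f hf hfa
  rw [hσ f hf, hfa, ← hσ _ (hF.1 2 i)]

end Rhd

theorem stmt_16 {A : Type*}
    (F : ∀ n : ℕ, Set ((Fin n → A) → A)) (hF : IsClone F)
    (hcons : IsConservative F) (hsym : IsSymmetric F) :
    ∀ a b : Fin 2 → A, Function.Injective a → Function.Injective b →
      (Rhd F 0 a b ↔ Rhd F 1 a b) ∧
      (Rhd F 0 a b ↔ Rhd F 0 b a) ∧
      (Rhd F 0 a b ↔ ∃ σ : Equiv.Perm A, ∀ f ∈ F 2, f b = σ (f a)) := by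
  intro a b ha hb
  have hcomm : Rhd F 0 a b ↔ Rhd F 0 b a := rhd_comm hsym ha hb
  have h01 : Rhd F 0 a b ↔ Rhd F 1 a b := hcomm.trans (rhd_one_iff_rhd_zero hcons ha hb).symm
  exact ⟨h01, hcomm,
    ⟨fun h₀ => exists_perm_of_rhd hcons ha hb h₀ (h01.mp h₀), rhd_of_exists_perm hF⟩⟩
end

section
/- Let A and Q be finite nonempty sets, F a clone on A satisfying Δ^2, and H ⊆ A^Q a Q-invariant set of F. Then H is decomposable over the family consisting of: all singletons {q} ⊆ Q; all pairs {p,q} such that h(p)=h(q) for all h ∈ H; and all sets Q^{[B]}_H = {q ∈ Q : H(q) ⊆ B} for two-element subsets B of A. That is, H equals the set of f ∈ A^Q whose restriction to each member R of this family lies in H|_R. -/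
open Function

/-!
Write `H_T` for the members of `H` that agree with `f` on `T`. If `f` passes the local tests, one
shows `H_P ≠ ∅` for every finite `P` by induction. In a minimal counterexample `P` every
`H_{P∖{q}}` is nonempty, and by `Δ²` two such witnesses (for different points) always flip `f`
between the same two values `a, b`: otherwise a binary idempotent operation merges them into a
member of `H_P`. The test on `Q^{[{a,b}]}_H` then yields `p₀ ∈ P` with `H(p₀) ⊄ {a, b}`, and a
member of `H_S` whose value at `p₀` lies outside `{a, b}` is carried, point by point, up to
`S = P ∖ {p₀}`, where witnesses for `p₀` only take the values `a, b`. Each step merges the current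
function with a witness, except when only `p₀` and one more point `p₁` are left; there the
relation `{(z p₁, z p₀) | z ∈ H_{P∖{p₀,p₁}}}` is forced into the diagonal, whereas the test on
`{p₁, p₀}` (or a witness for a third point) produces an element off the diagonal.
-/

open Set

section

variable {A Q : Type*} {F : ∀ n : ℕ, Set ((Fin n → A) → A)}

theorem Matrix.vec2_self (x : A) : ![x, x] = fun _ : Fin 2 => x :=
  funext (Fin.forall_fin_two.2 ⟨rfl, rfl⟩)

theorem Set.EqOn.insert {g f : Q → A} {s : Set Q} {a : Q} (hs : EqOn g f s) (ha : g a = f a) :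
    EqOn g f (insert a s) := by
  rintro q (rfl | hq)
  exacts [ha, hs hq]

theorem Set.EqOn.sdiff_singleton_of_sdiff_pair {g f : Q → A} {s : Set Q} {a b : Q}
    (h : EqOn g f (s \ {a, b})) (ha : g a = f a) : EqOn g f (s \ {b}) := by
  rintro q ⟨hq, hqb⟩
  by_cases hqa : q = a
  · exact hqa ▸ ha
  · exact h ⟨hq, by simp_all⟩

theorem restrictTo_mem_image_iff {R : Set Q} {f : Q → A} {H : Set (Q → A)} :
    restrictTo R f ∈ restrictTo R '' H ↔ ∃ h ∈ H, EqOn h f R :=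
  exists_congr fun _ => and_congr_right fun _ =>
    ⟨fun e q hq => congrFun e ⟨q, hq⟩, fun e => funext fun q => e q.2⟩

def IdemBinaryClosed (F : ∀ n : ℕ, Set ((Fin n → A) → A)) (G : Set (Q → A)) : Prop :=
  ∀ w ∈ F 2, (∀ x, w (fun _ => x) = x) → ∀ g₁ ∈ G, ∀ g₂ ∈ G, (fun q => w ![g₁ q, g₂ q]) ∈ G

theorem ClInvariant.idemBinaryClosed {H : Set (Q → A)} (hH : ClInvariant F H) :
    IdemBinaryClosed F H := by
  rintro w hw - g₁ h₁ g₂ h₂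
  convert hH 2 w hw ![g₁, g₂] (Fin.forall_fin_two.2 ⟨h₁, h₂⟩) using 3 with q
  ext i
  fin_cases i <;> rfl

namespace IdemBinaryClosed

variable {G : Set (Q → A)}

theorem sep_eqOn (hG : IdemBinaryClosed F G) (f : Q → A) (T : Set Q) :
    IdemBinaryClosed F {g ∈ G | EqOn g f T} := by
  intro w hw hwid g₁ ⟨h₁, h₁f⟩ g₂ ⟨h₂, h₂f⟩
  refine ⟨hG w hw hwid g₁ h₁ g₂ h₂, fun q hq => ?_⟩
  simp only [h₁f hq, h₂f hq, Matrix.vec2_self, hwid]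

theorem exists_interpolate (hG : IdemBinaryClosed F G) (hΔ : Delta2 F) {g₁ g₂ : Q → A}
    (h₁ : g₁ ∈ G) (h₂ : g₂ ∈ G) {q r : Q} (hq : g₁ q ≠ g₂ q) (hr : g₁ r ≠ g₂ r)
    (hqr : ({g₁ q, g₂ q} : Set A) ≠ {g₁ r, g₂ r}) {t u : A} (ht : t = g₁ q ∨ t = g₂ q)
    (hu : u = g₁ r ∨ u = g₂ r) :
    ∃ z ∈ G, z q = t ∧ z r = u ∧ ∀ p, g₁ p = g₂ p → z p = g₁ p := by
  have inj : ∀ {x y : A}, x ≠ y → Injective ![x, y] := by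
    intro x y hxy i j hij
    fin_cases i <;> fin_cases j <;> simp_all [eq_comm]
  have index : ∀ {x y t : A}, t = x ∨ t = y → ∃ i, ![x, y] i = t := by
    rintro x y t (rfl | rfl)
    exacts [⟨0, rfl⟩, ⟨1, rfl⟩]
  obtain ⟨i, hi⟩ := index ht
  obtain ⟨j, hj⟩ := index hu
  obtain ⟨w, hw, hwid, hwi, hwj⟩ := hΔ _ _ (inj hq) (inj hr)
    (by simpa only [Matrix.range_cons_cons_empty] using hqr) i j
  refine ⟨_, hG w hw hwid g₁ h₁ g₂ h₂, hwi.trans hi, hwj.trans hj, fun p hp => ?_⟩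
  simp only [hp, Matrix.vec2_self, hwid]

theorem exists_offDiag_of_ne (hG : IdemBinaryClosed F G) (hΔ : Delta2 F) {x v : Q → A}
    (hx : x ∈ G) (hv : v ∈ G) {q r s : Q} (hxrs : x r = x s) (hvrs : v r ≠ v s) (hxvr : x r ≠ v r)
    (hxvs : x r ≠ v s) (hxq : x q ≠ x r) (hxqv : x q ≠ v r) :
    ∃ z ∈ G, z q = x q ∧ z r ≠ z s := by
  obtain ⟨y, hy, hyr, hys, -⟩ := hG.exists_interpolate hΔ hx hv (q := r) (r := s) hxvr
    (hxrs ▸ hxvs) (by rw [Ne, Set.pair_eq_pair_iff, ← hxrs]; tauto) (Or.inr rfl) (Or.inl rfl)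
  have hyrs : y r ≠ y s := by rw [hyr, hys, ← hxrs]; exact hxvr.symm
  by_cases hyq : y q = x q
  · exact ⟨y, hy, hyq, hyrs⟩
  obtain ⟨z, hz, hzq, hzr, hzxy⟩ := hG.exists_interpolate hΔ hx hy (q := q) (r := r)
    (Ne.symm hyq) (by rw [hyr]; exact hxvr) (by rw [Ne, Set.pair_eq_pair_iff, hyr]; tauto)
    (Or.inl rfl) (Or.inr rfl)
  refine ⟨z, hz, hzq, ?_⟩
  rw [hzr, hzxy s hys.symm, ← hys]
  exact hyrs

theorem exists_offDiag (hG : IdemBinaryClosed F G) (hΔ : Delta2 F) {x v : Q → A}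
    (hx : x ∈ G) (hv : v ∈ G) {q r s : Q} (hxrs : x r = x s) (hvrs : v r ≠ v s) (hxvr : x r ≠ v r)
    (hxvs : x r ≠ v s) (hxq : x q ≠ x r) :
    ∃ z ∈ G, z q = x q ∧ z r ≠ z s := by
  by_cases hxqv : x q = v r
  · obtain ⟨z, hz, hzq, hzsr⟩ := hG.exists_offDiag_of_ne hΔ hx hv hxrs.symm (Ne.symm hvrs)
      (hxrs ▸ hxvs) (hxrs ▸ hxvr) (hxrs ▸ hxq) (hxqv ▸ hvrs)
    exact ⟨z, hz, hzq, Ne.symm hzsr⟩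
  · exact hG.exists_offDiag_of_ne hΔ hx hv hxrs hvrs hxvr hxvs hxq hxqv

theorem apply_eq_apply_of_row_col (hG : IdemBinaryClosed F G) (hΔ : Delta2 F) {r s : Q}
    {c d e : A} (hcd : c ≠ d) (hec : e ≠ c) (hed : e ≠ d)
    (hgc : ∃ g ∈ G, g r = c ∧ g s = c) (hgd : ∃ g ∈ G, g r = d ∧ g s = d)
    (hge : ∃ g ∈ G, g r = e ∧ g s = e)
    (hrow : ∀ z ∈ G, z r = c → z s = c) (hcol : ∀ z ∈ G, z s = d → z r = d) :
    ∀ z ∈ G, z r = z s := by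
  obtain ⟨gc, hgc, hgcr, hgcs⟩ := hgc
  obtain ⟨gd, hgd, hgdr, hgds⟩ := hgd
  obtain ⟨ge, hge, hger, hges⟩ := hge
  have hcol_c_of_ne : ∀ z ∈ G, z s = c → z r ≠ d → z r = c := by
    intro z hz hzs hzd
    by_contra hzc
    obtain ⟨y, hy, hyr, hys, -⟩ := hG.exists_interpolate hΔ hz hgd (q := r) (r := s)
      (by rwa [hgdr]) (by rw [hzs, hgds]; exact hcd)
      (by rw [Ne, Set.pair_eq_pair_iff, hgdr, hzs, hgds]; tauto) (Or.inl rfl) (Or.inr rfl)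
    exact hzd (hyr ▸ hcol y hy (hys.trans hgds))
  have hcol_c : ∀ z ∈ G, z s = c → z r = c := by
    intro z hz hzs
    by_contra hzc
    have hzd : z r = d := by_contra fun hzd => hzc (hcol_c_of_ne z hz hzs hzd)
    obtain ⟨y, hy, hyr, hys, -⟩ := hG.exists_interpolate hΔ hz hge (q := r) (r := s)
      (by rw [hzd, hger]; exact hed.symm) (by rw [hzs, hges]; exact hec.symm)
      (by rw [Ne, Set.pair_eq_pair_iff, hzd, hger, hzs, hges]; tauto) (Or.inr rfl) (Or.inl rfl)
    exact hec (hger ▸ hyr ▸ hcol_c_of_ne y hy (hys.trans hzs) (hyr.trans hger ▸ hed))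
  intro z hz
  by_contra hzrs
  have hzr : z r ≠ c := fun h => hzrs (h.trans (hrow z hz h).symm)
  have hzs : z s ≠ c := fun h => hzr (hcol_c z hz h)
  obtain ⟨y, hy, hyr, hys, -⟩ := hG.exists_interpolate hΔ hz hgc (q := r) (r := s)
    (by rwa [hgcr]) (by rwa [hgcs])
    (by rw [Ne, Set.pair_eq_pair_iff, hgcr, hgcs]; tauto) (Or.inr rfl) (Or.inl rfl)
  exact hzs (hys ▸ hrow y hy (hyr.trans hgcr))

end IdemBinaryClosed

section MinimalCounterexample

variable {H : Set (Q → A)} {f : Q → A} {P : Set Q} {B : Set A}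

theorem apply_ne_of_eqOn_sdiff (hno : ∀ h ∈ H, ¬EqOn h f P) {q : Q} {h : Q → A} (hh : h ∈ H)
    (hhf : EqOn h f (P \ {q})) : h q ≠ f q := fun hq =>
  hno h hh ((hhf.insert hq).mono (subset_insert_sdiff_singleton q P))

theorem pair_eq_pair_of_eqOn_sdiff (hΔ : Delta2 F) (hH : IdemBinaryClosed F H)
    (hno : ∀ h ∈ H, ¬EqOn h f P) {q r : Q} (hq : q ∈ P) (hr : r ∈ P) (hqr : q ≠ r)
    {h₁ h₂ : Q → A} (hh₁ : h₁ ∈ H) (hh₁f : EqOn h₁ f (P \ {q})) (hh₂ : h₂ ∈ H)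
    (hh₂f : EqOn h₂ f (P \ {r})) : ({f q, h₁ q} : Set A) = {f r, h₂ r} := by
  by_contra hne
  have h₁r : h₁ r = f r := hh₁f ⟨hr, hqr.symm⟩
  have h₂q : h₂ q = f q := hh₂f ⟨hq, hqr⟩
  obtain ⟨z, hz, hzq, hzr, hzh⟩ := hH.exists_interpolate hΔ hh₁ hh₂ (q := q) (r := r)
    (h₂q ▸ apply_ne_of_eqOn_sdiff hno hh₁ hh₁f)
    (h₁r ▸ (apply_ne_of_eqOn_sdiff hno hh₂ hh₂f).symm)
    (by rwa [h₁r, h₂q, Set.pair_comm (h₁ q)]) (Or.inr h₂q.symm) (Or.inl h₁r.symm)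
  refine hno z hz fun p hp => ?_
  by_cases hpq : p = q
  · rwa [hpq]
  by_cases hpr : p = r
  · rwa [hpr]
  rw [hzh p ((hh₁f ⟨hp, hpq⟩).trans (hh₂f ⟨hp, hpr⟩).symm), hh₁f ⟨hp, hpq⟩]

theorem exists_pair_eq (hΔ : Delta2 F) (hH : IdemBinaryClosed F H)
    (hno : ∀ h ∈ H, ¬EqOn h f P) (hP : P.Nontrivial)
    (hwit : ∀ q ∈ P, ∃ h ∈ H, EqOn h f (P \ {q})) :
    ∃ B : Set A, B.ncard = 2 ∧
      ∀ q ∈ P, ∀ h ∈ H, EqOn h f (P \ {q}) → ({f q, h q} : Set A) = B := by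
  obtain ⟨q₀, hq₀, r₀, hr₀, hne⟩ := hP
  obtain ⟨h₀, hh₀, hh₀f⟩ := hwit q₀ hq₀
  obtain ⟨k₀, hk₀, hk₀f⟩ := hwit r₀ hr₀
  refine ⟨{f r₀, k₀ r₀}, Set.ncard_pair (apply_ne_of_eqOn_sdiff hno hk₀ hk₀f).symm,
    fun q hq h hh hhf => ?_⟩
  by_cases hqr : q = r₀
  · subst hqr
    exact (pair_eq_pair_of_eqOn_sdiff hΔ hH hno hq hq₀ (Ne.symm hne) hh hhf hh₀ hh₀f).trans
      (pair_eq_pair_of_eqOn_sdiff hΔ hH hno hq₀ hq hne hh₀ hh₀f hk₀ hk₀f)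
  · exact pair_eq_pair_of_eqOn_sdiff hΔ hH hno hq hr₀ hqr hh hhf hk₀ hk₀f

theorem apply_mem_of_eqOn_sdiff
    (hB : ∀ q ∈ P, ∀ h ∈ H, EqOn h f (P \ {q}) → ({f q, h q} : Set A) = B) {q : Q} (hq : q ∈ P)
    {h : Q → A} (hh : h ∈ H) (hhf : EqOn h f (P \ {q})) : h q ∈ B :=
  hB q hq h hh hhf ▸ mem_insert_of_mem _ rfl

theorem mapsTo_of_forall_eqOn_sdiff (hwit : ∀ q ∈ P, ∃ h ∈ H, EqOn h f (P \ {q}))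
    (hB : ∀ q ∈ P, ∀ h ∈ H, EqOn h f (P \ {q}) → ({f q, h q} : Set A) = B) : MapsTo f P B :=
  fun q hq => by
    obtain ⟨h, hh, hhf⟩ := hwit q hq
    exact hB q hq h hh hhf ▸ mem_insert _ _

theorem apply_eq_apply_of_eqOn_sdiff (hno : ∀ h ∈ H, ¬EqOn h f P)
    (hB : ∀ q ∈ P, ∀ h ∈ H, EqOn h f (P \ {q}) → ({f q, h q} : Set A) = B) {q : Q} (hq : q ∈ P)
    {h h' : Q → A} (hh : h ∈ H) (hhf : EqOn h f (P \ {q})) (hh' : h' ∈ H)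
    (hh'f : EqOn h' f (P \ {q})) : h q = h' q := by
  have hpair := (hB q hq h hh hhf).trans (hB q hq h' hh' hh'f).symm
  rw [Set.pair_eq_pair_iff] at hpair
  exact hpair.elim And.right fun h => absurd h.2 (apply_ne_of_eqOn_sdiff hno hh hhf)

theorem exists_ne_of_eqOn_sdiff_pair (hΔ : Delta2 F) (hH : IdemBinaryClosed F H)
    (hwit : ∀ q ∈ P, ∃ h ∈ H, EqOn h f (P \ {q})) (hfB : MapsTo f P B)
    (hsep : ∀ p q, p ≠ q → f p ≠ f q → ∃ u ∈ H, u p ≠ u q)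
    {p₀ p₁ : Q} (hp₀ : p₀ ∈ P) (hp₁ : p₁ ∈ P) (hp : p₁ ≠ p₀) (hcd : f p₁ ≠ f p₀)
    {x : Q → A} (hx : x ∈ H) (hxf : EqOn x f (P \ {p₁, p₀})) (hxeq : x p₁ = x p₀)
    (hxB : x p₀ ∉ B) :
    ∃ y ∈ H, EqOn y f (P \ {p₁, p₀}) ∧ y p₁ ≠ y p₀ := by
  rcases (P \ {p₁, p₀}).eq_empty_or_nonempty with hT | ⟨q, hqP, hqT⟩
  · obtain ⟨u, hu, hune⟩ := hsep p₁ p₀ hp hcd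
    exact ⟨u, hu, hT ▸ eqOn_empty _ _, hune⟩
  obtain ⟨hqp₁, hqp₀⟩ : q ≠ p₁ ∧ q ≠ p₀ := by simpa [not_or] using hqT
  obtain ⟨W, hW, hWf⟩ := hwit q hqP
  have hWp₁ : W p₁ = f p₁ := hWf ⟨hp₁, hqp₁.symm⟩
  have hWp₀ : W p₀ = f p₀ := hWf ⟨hp₀, hqp₀.symm⟩
  have hxq : x q = f q := hxf ⟨hqP, hqT⟩
  obtain ⟨z, ⟨hz, hzf⟩, hzq, hzne⟩ := (hH.sep_eqOn f ((P \ {p₁, p₀}) \ {q})).exists_offDiag hΔ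
    ⟨hx, hxf.mono sdiff_subset⟩ ⟨hW, hWf.mono (sdiff_subset_sdiff_left sdiff_subset)⟩
    (q := q) hxeq (by rwa [hWp₁, hWp₀])
    (by rw [hxeq, hWp₁]; exact (ne_of_mem_of_not_mem (hfB hp₁) hxB).symm)
    (by rw [hxeq, hWp₀]; exact (ne_of_mem_of_not_mem (hfB hp₀) hxB).symm)
    (by rw [hxeq, hxq]; exact ne_of_mem_of_not_mem (hfB hqP) hxB)
  exact ⟨z, hz, (hzf.insert (hzq.trans hxq)).mono (subset_insert_sdiff_singleton q _), hzne⟩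

theorem false_of_eqOn_sdiff_pair (hΔ : Delta2 F) (hH : IdemBinaryClosed F H)
    (hno : ∀ h ∈ H, ¬EqOn h f P) (hwit : ∀ q ∈ P, ∃ h ∈ H, EqOn h f (P \ {q}))
    (hB : ∀ q ∈ P, ∀ h ∈ H, EqOn h f (P \ {q}) → ({f q, h q} : Set A) = B)
    (hsep : ∀ p q, p ≠ q → f p ≠ f q → ∃ u ∈ H, u p ≠ u q)
    {p₀ p₁ : Q} (hp₀ : p₀ ∈ P) (hp₁ : p₁ ∈ P) (hp : p₁ ≠ p₀)
    {x : Q → A} (hx : x ∈ H) (hxf : EqOn x f (P \ {p₁, p₀})) (hxeq : x p₁ = x p₀)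
    (hxB : x p₀ ∉ B) {W₀ : Q → A} (hW₀ : W₀ ∈ H) (hW₀f : EqOn W₀ f (P \ {p₀}))
    (hW₀p₀ : W₀ p₀ = f p₁) : False := by
  have hfB := mapsTo_of_forall_eqOn_sdiff hwit hB
  have hcd : f p₁ ≠ f p₀ := hW₀p₀ ▸ apply_ne_of_eqOn_sdiff hno hW₀ hW₀f
  obtain ⟨W₁, hW₁, hW₁f⟩ := hwit p₁ hp₁
  have hW₁p₀ : W₁ p₀ = f p₀ := hW₁f ⟨hp₀, hp.symm⟩
  have hW₁p₁ : W₁ p₁ = f p₀ := by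
    have hpair := (hB p₁ hp₁ W₁ hW₁ hW₁f).trans (hB p₀ hp₀ W₀ hW₀ hW₀f).symm
    rw [hW₀p₀, Set.pair_eq_pair_iff] at hpair
    exact hpair.elim (fun h => absurd h.1 hcd) And.right
  have hdiag := (hH.sep_eqOn f (P \ {p₁, p₀})).apply_eq_apply_of_row_col hΔ (r := p₁) (s := p₀)
    hcd (ne_of_mem_of_not_mem (hfB hp₁) hxB).symm (ne_of_mem_of_not_mem (hfB hp₀) hxB).symm
    ⟨W₀, ⟨hW₀, hW₀f.mono (sdiff_subset_sdiff_right (subset_insert _ _))⟩,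
      hW₀f ⟨hp₁, hp⟩, hW₀p₀⟩
    ⟨W₁, ⟨hW₁, hW₁f.mono (sdiff_subset_sdiff_right (by simp))⟩, hW₁p₁, hW₁p₀⟩
    ⟨x, ⟨hx, hxf⟩, hxeq, rfl⟩
    (fun z ⟨hz, hzf⟩ hz₁ => (apply_eq_apply_of_eqOn_sdiff hno hB hp₀ hz
      (hzf.sdiff_singleton_of_sdiff_pair hz₁) hW₀ hW₀f).trans hW₀p₀)
    (fun z ⟨hz, hzf⟩ hz₀ => (apply_eq_apply_of_eqOn_sdiff hno hB hp₁ hz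
      (by rw [pair_comm] at hzf; exact hzf.sdiff_singleton_of_sdiff_pair hz₀) hW₁ hW₁f).trans
      hW₁p₁)
  obtain ⟨y, hy, hyf, hyne⟩ :=
    exists_ne_of_eqOn_sdiff_pair hΔ hH hwit hfB hsep hp₀ hp₁ hp hcd hx hxf hxeq hxB
  exact hyne (hdiag y ⟨hy, hyf⟩)

theorem exists_eqOn_insert_of_eqOn_insert (hΔ : Delta2 F) (hH : IdemBinaryClosed F H)
    {p₀ p₁ : Q} {S : Set Q} (hf₁B : f p₁ ∈ B) {x : Q → A} (hx : x ∈ H) (hxf : EqOn x f S)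
    (hxB : x p₀ ∉ B) (hx₁ : x p₁ ≠ f p₁) {W : Q → A} (hW : W ∈ H)
    (hWf : EqOn W f (insert p₁ S)) (hWB : W p₀ ∈ B) (hblock : ¬(W p₀ = f p₁ ∧ x p₁ = x p₀)) :
    ∃ z ∈ H, EqOn z f (insert p₁ S) ∧ z p₀ ∉ B := by
  have hW₁ : W p₁ = f p₁ := hWf (mem_insert p₁ S)
  obtain ⟨z, hz, hz₁, hz₀, hzWx⟩ := hH.exists_interpolate hΔ hW hx (q := p₁) (r := p₀)
    (hW₁ ▸ Ne.symm hx₁) (ne_of_mem_of_not_mem hWB hxB)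
    (by rw [Ne, Set.pair_eq_pair_iff, hW₁]
        exact fun h => h.elim (fun h => hblock ⟨h.1.symm, h.2⟩) fun h => hxB (h.1 ▸ hf₁B))
    (Or.inl hW₁.symm) (Or.inr rfl)
  refine ⟨z, hz, EqOn.insert (fun q hq => ?_) hz₁, hz₀ ▸ hxB⟩
  have hWq := hWf (mem_insert_of_mem p₁ hq)
  rw [hzWx q (hWq.trans (hxf hq).symm), hWq]

theorem exists_eqOn_insert (hΔ : Delta2 F) (hH : IdemBinaryClosed F H)
    (hno : ∀ h ∈ H, ¬EqOn h f P) (hwit : ∀ q ∈ P, ∃ h ∈ H, EqOn h f (P \ {q}))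
    (hB : ∀ q ∈ P, ∀ h ∈ H, EqOn h f (P \ {q}) → ({f q, h q} : Set A) = B)
    (hsep : ∀ p q, p ≠ q → f p ≠ f q → ∃ u ∈ H, u p ≠ u q)
    {p₀ p₁ : Q} {S : Set Q} (hp₀ : p₀ ∈ P) (hsub : insert p₁ S ⊆ P \ {p₀})
    {x : Q → A} (hx : x ∈ H) (hxf : EqOn x f S) (hxB : x p₀ ∉ B) :
    ∃ z ∈ H, EqOn z f (insert p₁ S) ∧ z p₀ ∉ B := by
  obtain ⟨hp₁, hp₁₀⟩ := hsub (mem_insert p₁ S)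
  by_cases hx₁ : x p₁ = f p₁
  · exact ⟨x, hx, hxf.insert hx₁, hxB⟩
  have hf₁B : f p₁ ∈ B := mapsTo_of_forall_eqOn_sdiff hwit hB hp₁
  obtain ⟨W₀, hW₀, hW₀f⟩ := hwit p₀ hp₀
  by_cases hblock : W₀ p₀ = f p₁ ∧ x p₁ = x p₀
  swap
  · exact exists_eqOn_insert_of_eqOn_insert hΔ hH hf₁B hx hxf hxB hx₁ hW₀ (hW₀f.mono hsub)
      (apply_mem_of_eqOn_sdiff hB hp₀ hW₀ hW₀f) hblock
  by_cases hrest : ∃ q ∈ P, q ∉ insert p₁ S ∧ q ≠ p₀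
  · obtain ⟨q, hq, hqS, hqp₀⟩ := hrest
    obtain ⟨W, hW, hWf⟩ := hwit q hq
    have hWp₀ : W p₀ = f p₀ := hWf ⟨hp₀, Ne.symm hqp₀⟩
    have hSq : insert p₁ S ⊆ P \ {q} := fun p hp => ⟨(hsub hp).1, fun hpq => hqS (hpq ▸ hp)⟩
    refine exists_eqOn_insert_of_eqOn_insert hΔ hH hf₁B hx hxf hxB hx₁ hW (hWf.mono hSq)
      (hWp₀ ▸ mapsTo_of_forall_eqOn_sdiff hwit hB hp₀) fun h => ?_
    exact apply_ne_of_eqOn_sdiff hno hW₀ hW₀f (hblock.1.trans (h.1.symm.trans hWp₀))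
  push Not at hrest
  refine (false_of_eqOn_sdiff_pair hΔ hH hno hwit hB hsep hp₀ hp₁ hp₁₀ hx
    (hxf.mono fun q ⟨hq, hqp⟩ => ?_) hblock.2 hxB hW₀ hW₀f hblock.1).elim
  obtain ⟨hqp₁, hqp₀⟩ : q ≠ p₁ ∧ q ≠ p₀ := by simpa [not_or] using hqp
  by_contra hqS
  exact hqp₀ (hrest q hq (by simp [hqp₁, hqS]))

theorem false_of_forall_eqOn_sdiff (hΔ : Delta2 F) (hH : IdemBinaryClosed F H)
    (hPfin : P.Finite) (hP : P.Nontrivial) (hno : ∀ h ∈ H, ¬EqOn h f P)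
    (hwit : ∀ q ∈ P, ∃ h ∈ H, EqOn h f (P \ {q}))
    (hsep : ∀ p q, p ≠ q → f p ≠ f q → ∃ u ∈ H, u p ≠ u q)
    (hpair : ∀ B : Set A, B.ncard = 2 → ∃ h ∈ H, EqOn h f {q | valuesAt H q ⊆ B}) : False := by
  obtain ⟨B, hBcard, hB⟩ := exists_pair_eq hΔ hH hno hP hwit
  by_cases hval : ∀ q ∈ P, valuesAt H q ⊆ B
  · obtain ⟨h, hh, hhf⟩ := hpair B hBcard
    exact hno h hh (hhf.mono hval)
  push Not at hval
  obtain ⟨p₀, hp₀, hp₀B⟩ := hval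
  obtain ⟨_, ⟨g, hg, rfl⟩, hgB⟩ := not_subset.1 hp₀B
  obtain ⟨x, hx, hxf, hxB⟩ : ∃ x ∈ H, EqOn x f (P \ {p₀}) ∧ x p₀ ∉ B := by
    refine hPfin.sdiff.induction_on_subset (motive := fun S _ => ∃ x ∈ H, EqOn x f S ∧ x p₀ ∉ B)
      _ ⟨g, hg, eqOn_empty _ _, hgB⟩ ?_
    rintro p₁ S hp₁ hS - ⟨x, hx, hxf, hxB⟩
    exact exists_eqOn_insert hΔ hH hno hwit hB hsep hp₀ (insert_subset hp₁ hS) hx hxf hxB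
  exact hxB (apply_mem_of_eqOn_sdiff hB hp₀ hx hxf)

end MinimalCounterexample

theorem exists_eqOn_of_local [Nonempty Q] {H : Set (Q → A)} (hΔ : Delta2 F)
    (hH : IdemBinaryClosed F H) {f : Q → A} (hpoint : ∀ q, ∃ h ∈ H, h q = f q)
    (hsep : ∀ p q, p ≠ q → f p ≠ f q → ∃ u ∈ H, u p ≠ u q)
    (hpair : ∀ B : Set A, B.ncard = 2 → ∃ h ∈ H, EqOn h f {q | valuesAt H q ⊆ B})
    (P : Finset Q) : ∃ h ∈ H, EqOn h f P := by
  classical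
  induction P using Finset.strongInduction with
  | H P ih =>
  by_contra hno
  push Not at hno
  rcases (P : Set Q).subsingleton_or_nontrivial with hP | hP
  · obtain ⟨q, hq⟩ : ∃ q, (P : Set Q) ⊆ {q} := by
      rcases hP.eq_empty_or_singleton with hP | ⟨q, hP⟩
      exacts [⟨Classical.arbitrary Q, hP ▸ empty_subset _⟩, ⟨q, hP.le⟩]
    obtain ⟨h, hh, hhq⟩ := hpoint q
    exact hno h hh ((eqOn_singleton.2 hhq).mono hq)
  refine false_of_forall_eqOn_sdiff hΔ hH P.finite_toSet hP hno (fun q hq => ?_) hsep hpair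
  obtain ⟨h, hh, hhf⟩ := ih (P.erase q) (Finset.erase_ssubset hq)
  exact ⟨h, hh, by rwa [Finset.coe_erase] at hhf⟩

end

theorem stmt_18_general {A Q : Type*} [Finite Q] [Nonempty Q]
    (F : ∀ n : ℕ, Set ((Fin n → A) → A)) (hΔ : Delta2 F)
    (H : Set (Q → A)) (hH : ClInvariant F H) :
    -- the decomposition family: singletons, identified pairs, and the sets Q^{[B]}_H
    let 𝓡 : Set (Set Q) := {R | (∃ q : Q, R = {q}) ∨
      (∃ p q : Q, p ≠ q ∧ R = {p, q} ∧ ∀ h ∈ H, h p = h q) ∨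
      (∃ B : Set A, B.ncard = 2 ∧ R = {q : Q | valuesAt H q ⊆ B})}
    H = {f : Q → A | ∀ R ∈ 𝓡, restrictTo R f ∈ restrictTo R '' H} := by
  intro 𝓡
  ext f
  simp only [mem_ofPred_eq, restrictTo_mem_image_iff]
  refine ⟨fun hf _ _ => ⟨f, hf, eqOn_refl f _⟩, fun hf => ?_⟩
  have hpoint (q : Q) : ∃ h ∈ H, h q = f q := by
    obtain ⟨h, hh, hhf⟩ := hf {q} (Or.inl ⟨q, rfl⟩)
    exact ⟨h, hh, hhf rfl⟩
  have hsep (p q : Q) (hpq : p ≠ q) (hfpq : f p ≠ f q) : ∃ u ∈ H, u p ≠ u q := by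
    by_contra hc
    push Not at hc
    obtain ⟨h, hh, hhf⟩ := hf {p, q} (Or.inr (Or.inl ⟨p, q, hpq, rfl, hc⟩))
    exact hfpq ((hhf (mem_insert p _)).symm.trans ((hc h hh).trans (hhf (mem_insert_of_mem p rfl))))
  have := Fintype.ofFinite Q
  obtain ⟨h, hh, hhf⟩ := exists_eqOn_of_local hΔ hH.idemBinaryClosed hpoint hsep
    (fun B hB => hf _ (Or.inr (Or.inr ⟨B, hB, rfl⟩))) Finset.univ
  rw [Finset.coe_univ, eqOn_univ] at hhf
  exact hhf ▸ hh

theorem stmt_18 {A Q : Type*} [Finite A] [Nonempty A] [Finite Q] [Nonempty Q]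
    (F : ∀ n : ℕ, Set ((Fin n → A) → A)) (hF : IsClone F) (hΔ : Delta2 F)
    (H : Set (Q → A)) (hH : ClInvariant F H) :
    -- the decomposition family: singletons, identified pairs, and the sets Q^{[B]}_H
    let 𝓡 : Set (Set Q) := {R | (∃ q : Q, R = {q}) ∨
      (∃ p q : Q, p ≠ q ∧ R = {p, q} ∧ ∀ h ∈ H, h p = h q) ∨
      (∃ B : Set A, B.ncard = 2 ∧ R = {q : Q | valuesAt H q ⊆ B})}
    H = {f : Q → A | ∀ R ∈ 𝓡, restrictTo R f ∈ restrictTo R '' H} :=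
  stmt_18_general F hΔ H hH
end

section
/- Let A and Q be finite nonempty sets, n ≥ 3, and F a clone on A satisfying Δ^s_n. A set H ⊆ A^Q is a Q-invariant set of F if and only if: (1) H|_P is a P-invariant set of F for every P which is a singleton, or a pair {p,q} for which some permutation σ of A satisfies h(q)=σ(h(p)) for all h ∈ H, or the set Q^{(n)}_H = {q ∈ Q : |H(q)| < n}; and (2) H is decomposable over this same family of subsets of Q. -/
open Function

/-!
Invariance of the restrictions, and invariance of a set decomposable over invariant
restrictions, are formal. The content is that an invariant `H` is decomposable: a function
agreeing with members of `H` on every set of the family is built point by point, and the only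
nontrivial step adds a point `q` with `|H(q)| ≥ n` that is linked to no point handled so far.

The semiprojections `s` of `Δ^s_n` return coordinate `i` on every non-injective tuple, so the
members of `H` agreeing with a fixed `h` on a set `T` are again closed under them. If `p` is not
linked to `q`, two members of `H` agree at `p` and differ at `q`: otherwise the value at `q` is a
function of the value at `p`, which is either injective (a link) or, by a semiprojection, forces
`|H(q)| = 1`. This weak separation passes to the members agreeing with `h` on `T`, and
semiprojections applied to `n`-tuples with distinct values at `q` upgrade it to strong
separation. Induction on `T` then shows that every value in `H(q)` is taken by a member of `H`
agreeing with `h` on `T`.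
-/

section Semiprojections

open Set

variable {A Q : Type*} {n : ℕ}

def IsSemiprojection (i : Fin n) (s : (Fin n → A) → A) : Prop :=
  ∀ x : Fin n → A, ¬ Injective x → s x = x i

/-- `Δ^s_n`, with coordinate `i`, for the operations preserving `G`. -/
def SemiprojClosed (i : Fin n) (G : Set (Q → A)) : Prop :=
  ∀ c : Fin n → A, Injective c → ∀ j,
    ∃ s, IsSemiprojection i s ∧ s c = c j ∧ ClPreserves s G

/-- The pairs `{p, q}` of `[Q]^{2,0}_G`. -/
def Linked (G : Set (Q → A)) (p q : Q) : Prop :=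
  ∃ σ : Equiv.Perm A, ∀ h ∈ G, h q = σ (h p)

theorem exists_injective_fin_of_subset {S T : Set A} (i : Fin n) (hTS : T ⊆ S)
    (hT : T.ncard ≤ n) (hS : n ≤ S.ncard) {a : A} (ha : a ∈ T) :
    ∃ c : Fin n → A, Injective c ∧ range c ⊆ S ∧ T ⊆ range c ∧ c i = a := by
  obtain ⟨U, hTU, hUS, hU⟩ := exists_subsuperset_card_eq hTS hT hS
  have : Finite U := finite_of_ncard_pos (hU ▸ i.pos)
  let e : Fin n ≃ U := (Finite.equivFinOfCardEq (Nat.card_coe_set_eq U ▸ hU)).symm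
  let E : Fin n ≃ U := (Equiv.swap i (e.symm ⟨a, hTU ha⟩)).trans e
  refine ⟨fun m => E m, Subtype.val_injective.comp E.injective, ?_, ?_, by simp [E]⟩
  · rintro _ ⟨m, rfl⟩
    exact hUS (E m).2
  · intro b hb
    exact ⟨E.symm ⟨b, hTU hb⟩, by simp⟩

theorem exists_tuple_injective_apply {G : Set (Q → A)} {q : Q} (hn : 3 ≤ n)
    (hq : n ≤ (valuesAt G q).ncard) (i : Fin n) {x y z : Q → A} (hx : x ∈ G) (hy : y ∈ G)
    (hz : z ∈ G) (hxy : x q ≠ y q) (hxz : x q ≠ z q) (hyz : y q ≠ z q) :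
    ∃ X : Fin n → Q → A, (∀ m, X m ∈ G) ∧ Injective (fun m => X m q) ∧ X i = x ∧
      ∃ j k, X j = y ∧ X k = z := by
  classical
  have hT : ({x q, y q, z q} : Set A).ncard ≤ n :=
    (ncard_eq_three.2 ⟨_, _, _, hxy, hxz, hyz, rfl⟩).trans_le hn
  have hTS : ({x q, y q, z q} : Set A) ⊆ valuesAt G q := by
    rintro _ (rfl | rfl | rfl)
    exacts [⟨x, hx, rfl⟩, ⟨y, hy, rfl⟩, ⟨z, hz, rfl⟩]
  obtain ⟨c, hc, hcG, hcT, hci⟩ := exists_injective_fin_of_subset i hTS hT hq (mem_insert _ _)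
  choose g hg hgq using fun m => hcG ⟨m, rfl⟩
  obtain ⟨j, hj⟩ := hcT (by simp : y q ∈ _)
  obtain ⟨k, hk⟩ := hcT (by simp : z q ∈ _)
  let X m := if c m = x q then x else if c m = y q then y else if c m = z q then z else g m
  refine ⟨X, fun m => ?_, fun m m' h => hc ?_, by simp [X, hci], j, k, ?_, ?_⟩
  · simp only [X]
    split_ifs
    exacts [hx, hy, hz, hg m]
  · convert h using 1 <;> simp only [X] <;> split_ifs <;> simp_all
  · simp [X, hj, hxy.symm]
  · simp [X, hk, hxz.symm, hyz.symm]

namespace SemiprojClosed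

variable {i : Fin n} {G : Set (Q → A)} {p q : Q}

theorem fiber (hG : SemiprojClosed i G) (hn : 2 ≤ n) (T : Set Q) (h : Q → A) :
    SemiprojClosed i {f ∈ G | EqOn f h T} := by
  intro c hc j
  obtain ⟨s, hs, hsj, hsG⟩ := hG c hc j
  refine ⟨s, hs, hsj, fun X hX => ⟨hsG X fun m => (hX m).1, fun t ht => ?_⟩⟩
  have hconst : ∀ m, X m t = h t := fun m => (hX m).2 ht
  have hne : (⟨0, by omega⟩ : Fin n) ≠ ⟨1, by omega⟩ := by simp
  show s _ = _
  rw [hs _ fun hinj => hne (hinj ((hconst _).trans (hconst _).symm)), hconst]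

theorem exists_mem_eq_of_agree (hG : SemiprojClosed i G) (hn : 3 ≤ n)
    (hq : n ≤ (valuesAt G q).ncard) {x y z : Q → A} (hx : x ∈ G) (hy : y ∈ G) (hz : z ∈ G)
    (hxy : x q ≠ y q) (hxz : x q ≠ z q) (hyz : y q ≠ z q) :
    ∃ f ∈ G, f q = z q ∧ ∀ t, (x t = y t ∨ x t = z t ∨ y t = z t) → f t = x t := by
  obtain ⟨X, hXG, hXq, rfl, j, k, rfl, rfl⟩ :=
    exists_tuple_injective_apply hn hq i hx hy hz hxy hxz hyz
  obtain ⟨s, hs, hsk, hsG⟩ := hG _ hXq k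
  refine ⟨fun t => s fun m => X m t, hsG X hXG, hsk, fun t ht => hs _ fun hinj => ?_⟩
  rcases ht with ht | ht | ht
  · exact hxy (by rw [hinj ht])
  · exact hxz (by rw [hinj ht])
  · exact hyz (by rw [hinj ht])

theorem stronglySeparates (hG : SemiprojClosed i G) (hn : 3 ≤ n)
    (hq : n ≤ (valuesAt G q).ncard) {a : A} (hw : WeaklySeparates G p q a) {h : Q → A}
    (hh : h ∈ G) : StronglySeparates G p q (h p) := by
  obtain ⟨u, hu, v, hv, hup, hvp, huv⟩ := hw
  have hsat : ∀ b ∈ valuesAt G q, ∃ f ∈ G, f p = a ∧ f q = b := by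
    rintro _ ⟨w, hw, rfl⟩
    by_cases hwu : w q = u q
    · exact ⟨u, hu, hup, hwu.symm⟩
    by_cases hwv : w q = v q
    · exact ⟨v, hv, hvp, hwv.symm⟩
    obtain ⟨f, hf, hfq, hfu⟩ :=
      hG.exists_mem_eq_of_agree hn hq hu hv hw huv (Ne.symm hwu) (Ne.symm hwv)
    exact ⟨f, hf, (hfu p (Or.inl (hup.trans hvp.symm))).trans hup, hfq⟩
  intro b hb
  by_cases hbh : b = h q
  · exact ⟨h, hh, rfl, hbh.symm⟩
  obtain ⟨c, hc, hcb⟩ : ∃ c ∈ valuesAt G q, c ∉ ({h q, b} : Set A) :=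
    exists_mem_notMem_of_ncard_lt_ncard ((ncard_insert_le _ _).trans_lt (by simp; omega))
  simp only [mem_insert_iff, mem_singleton_iff, not_or] at hcb
  obtain ⟨w₁, hw₁, hw₁p, rfl⟩ := hsat b hb
  obtain ⟨w₂, hw₂, hw₂p, rfl⟩ := hsat c hc
  obtain ⟨f, hf, hfq, hfh⟩ :=
    hG.exists_mem_eq_of_agree hn hq hh hw₂ hw₁ (Ne.symm hcb.1) (Ne.symm hbh) hcb.2
  exact ⟨f, hf, hfh p (Or.inr (Or.inr (hw₂p.trans hw₁p.symm))), hfq⟩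

theorem exists_weaklySeparates_of_not_linked [Finite A] (hG : SemiprojClosed i G) (hn : 3 ≤ n)
    (hq : n ≤ (valuesAt G q).ncard) (hpq : ¬ Linked G p q) : ∃ a, WeaklySeparates G p q a := by
  classical
  by_contra hsep
  have hdep : ∀ f₁ ∈ G, ∀ f₂ ∈ G, f₁ p = f₂ p → f₁ q = f₂ q := fun f₁ h₁ f₂ h₂ he =>
    by_contra fun hne => hsep ⟨_, f₁, h₁, f₂, h₂, rfl, he.symm, hne⟩
  let φ : A → A := fun a => if hf : ∃ f ∈ G, f p = a then hf.choose q else a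
  have hφ : ∀ f ∈ G, f q = φ (f p) := fun f hf => by
    have hex : ∃ g ∈ G, g p = f p := ⟨f, hf, rfl⟩
    simp only [φ, dif_pos hex]
    exact hdep _ hf _ hex.choose_spec.1 hex.choose_spec.2.symm
  have himage : valuesAt G q = φ '' valuesAt G p := by
    rw [valuesAt, valuesAt, image_image]
    exact image_congr hφ
  by_cases hinj : InjOn φ (valuesAt G p)
  · obtain ⟨σ, hσ⟩ := Equiv.Perm.exists_extending_pair (fun a : valuesAt G p => (a : A))
      (fun a => φ a) Subtype.val_injective hinj.injective
    exact hpq ⟨σ, fun f hf => (hφ f hf).trans (hσ ⟨f p, f, hf, rfl⟩).symm⟩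
  · simp only [InjOn, not_forall] at hinj
    obtain ⟨_, ⟨f₁, hf₁, rfl⟩, _, ⟨f₂, hf₂, rfl⟩, hφ₁₂, hne⟩ := hinj
    beta_reduce at hφ₁₂ hne
    have hp : n ≤ (valuesAt G p).ncard := hq.trans (himage ▸ ncard_image_le)
    have hconst : valuesAt G q ⊆ {φ (f₁ p)} := by
      rintro _ ⟨g, hg, rfl⟩
      show g q = _
      rw [hφ g hg]
      by_cases h₁ : g p = f₁ p
      · rw [h₁]
      by_cases h₂ : g p = f₂ p
      · rw [h₂, hφ₁₂]
      obtain ⟨f, hf, hfp, hff₁⟩ :=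
        hG.exists_mem_eq_of_agree hn hp hf₁ hf₂ hg hne (Ne.symm h₁) (Ne.symm h₂)
      rw [← hfp, ← hφ f hf, ← hφ f₁ hf₁]
      exact hff₁ q (Or.inl (by rw [hφ f₁ hf₁, hφ f₂ hf₂, hφ₁₂]))
    have := ncard_le_ncard hconst
    rw [ncard_singleton] at this
    omega

theorem weaklySeparates_fiber (hG : SemiprojClosed i G) (hn : 3 ≤ n) {T : Set Q} {h : Q → A}
    (hfib : valuesAt {f ∈ G | EqOn f h T} q = valuesAt G q) (hq : n ≤ (valuesAt G q).ncard)
    {a : A} (hw : WeaklySeparates G p q a) :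
    ∃ a', WeaklySeparates {f ∈ G | EqOn f h T} p q a' := by
  classical
  obtain ⟨u, hu, v, hv, hup, hvp, huv⟩ := hw
  set G' := {f ∈ G | EqOn f h T}
  obtain ⟨d, hd, hdne⟩ : ∃ d ∈ valuesAt G q, d ∉ ({u q, v q} : Set A) :=
    exists_mem_notMem_of_ncard_lt_ncard ((ncard_insert_le _ _).trans_lt (by simp; omega))
  simp only [mem_insert_iff, mem_singleton_iff, not_or] at hdne
  rw [← hfib] at hd hq
  obtain ⟨g₀, hg₀, rfl⟩ := hd
  obtain ⟨u₀, hu₀, hu₀q⟩ : u q ∈ valuesAt G' q := hfib ▸ ⟨u, hu, rfl⟩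
  obtain ⟨v₀, hv₀, hv₀q⟩ : v q ∈ valuesAt G' q := hfib ▸ ⟨v, hv, rfl⟩
  beta_reduce at hdne hu₀q hv₀q
  obtain ⟨X, hXG', hXq, rfl, j, k, rfl, rfl⟩ := exists_tuple_injective_apply hn hq i hg₀ hu₀ hv₀
    (hu₀q ▸ hdne.1) (hv₀q ▸ hdne.2) (hu₀q ▸ hv₀q ▸ huv)
  have hij : i ≠ j := fun e => hdne.1 (by rw [e, hu₀q])
  have hkj : k ≠ j := fun e => huv (by rw [← hu₀q, ← hv₀q, e])
  have hik : i ≠ k := fun e => hdne.2 (by rw [e, hv₀q])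
  obtain ⟨s, hs, hsj, hsG⟩ := hG _ hXq j
  -- one semiprojection for both tuples keeps `Φ u p = Φ v p`
  let Φ (w : Q → A) (t : Q) : A := s fun m => update X j w m t
  have hΦ : ∀ w ∈ G, Φ w ∈ G' := fun w hw => by
    refine ⟨hsG _ fun m => ?_, fun t ht => ?_⟩
    · rcases eq_or_ne m j with rfl | hm
      · simpa using hw
      · simpa [hm] using (hXG' m).1
    · have hXt : ∀ m, X m t = h t := fun m => (hXG' m).2 ht
      have hni : ¬ Injective fun m => update X j w m t := fun hinj =>
        hik (hinj (by simp [update_of_ne hij, update_of_ne hkj, hXt]))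
      simp only [Φ, hs _ hni, update_of_ne hij, hXt]
  have huq : Φ u q = u q := by
    have : (fun m => update X j u m q) = fun m => X m q := by
      funext m; rcases eq_or_ne m j with rfl | hm <;> simp [*]
    simp only [Φ, this, hsj, hu₀q]
  have hvq : Φ v q = X i q := by
    have hni : ¬ Injective fun m => update X j v m q := fun hinj =>
      hkj (hinj (by simp [update_of_ne hkj, hv₀q]))
    simp only [Φ, hs _ hni, update_of_ne hij]
  have hpe : Φ u p = Φ v p := by
    simp only [Φ]
    congr 1
    funext m
    rcases eq_or_ne m j with rfl | hm <;> simp [*]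
  exact ⟨_, Φ u, hΦ u hu, Φ v, hΦ v hv, rfl, hpe.symm, by rw [huq, hvq]; exact Ne.symm hdne.1⟩

theorem valuesAt_fiber [Finite A] (hG : SemiprojClosed i G) (hn : 3 ≤ n)
    (hq : n ≤ (valuesAt G q).ncard) {T : Set Q} (hT : T.Finite)
    (hlink : ∀ p ∈ T, ¬ Linked G p q) {h : Q → A} (hh : h ∈ G) :
    valuesAt {f ∈ G | EqOn f h T} q = valuesAt G q := by
  induction T, hT using Set.Finite.induction_on generalizing h with
  | empty => simp [eqOn_empty]
  | @insert p T _ _ ih =>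
    refine Subset.antisymm (image_mono (sep_subset _ _)) fun b hb => ?_
    have hfib := ih (fun p' hp' => hlink p' (mem_insert_of_mem _ hp')) hh
    obtain ⟨a, ha⟩ := hG.exists_weaklySeparates_of_not_linked hn hq (hlink p (mem_insert _ _))
    obtain ⟨a', ha'⟩ := hG.weaklySeparates_fiber hn hfib hq ha
    obtain ⟨f, ⟨hf, hfT⟩, hfp, hfq⟩ := (hG.fiber (by omega) T h).stronglySeparates hn
      (hfib ▸ hq) ha' ⟨hh, fun _ _ => rfl⟩ b (hfib ▸ hb)
    refine ⟨f, ⟨hf, fun t ht => ?_⟩, hfq⟩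
    rcases ht with rfl | ht
    exacts [hfp, hfT ht]

theorem mem_of_decomposable [Finite A] [Finite Q] (hG : SemiprojClosed i G) (hn : 3 ≤ n)
    {g : Q → A} (hsingle : ∀ q, g q ∈ valuesAt G q)
    (hpair : ∀ p q, p ≠ q → Linked G p q → ∃ f ∈ G, f p = g p ∧ f q = g q)
    (hsmall : ∃ f ∈ G, EqOn f g {q | (valuesAt G q).ncard < n}) : g ∈ G := by
  set N := {q | (valuesAt G q).ncard < n}
  suffices ∀ T : Set Q, ∃ f ∈ G, EqOn f g (T ∪ N) by
    obtain ⟨f, hf, hfg⟩ := this univ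
    rwa [(eqOn_univ f g).1 (hfg.mono subset_union_left)] at hf
  intro T
  induction T, T.toFinite using Set.Finite.induction_on with
  | empty => simpa using hsmall
  | @insert q T hqT _ ih =>
    obtain ⟨f, hf, hfg⟩ := ih
    suffices ∃ f' ∈ G, EqOn f' f (T ∪ N) ∧ f' q = g q by
      obtain ⟨f', hf', hf'f, hf'q⟩ := this
      refine ⟨f', hf', ?_⟩
      rw [insert_union]
      rintro t (rfl | ht)
      exacts [hf'q, (hf'f ht).trans (hfg ht)]
    by_cases hqN : q ∈ N
    · exact ⟨f, hf, fun _ _ => rfl, hfg (Or.inr hqN)⟩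
    have hqTN : q ∉ T ∪ N := fun h => h.elim hqT hqN
    by_cases hlink : ∃ p ∈ T ∪ N, Linked G p q
    · obtain ⟨p, hp, σ, hσ⟩ := hlink
      obtain ⟨w, hw, hwp, hwq⟩ := hpair p q (ne_of_mem_of_not_mem hp hqTN) ⟨σ, hσ⟩
      exact ⟨f, hf, fun _ _ => rfl, by rw [hσ f hf, hfg hp, ← hwp, ← hσ w hw, hwq]⟩
    push Not at hlink
    have hfib := hG.valuesAt_fiber hn (not_lt.1 hqN) (toFinite _) hlink hf
    obtain ⟨f', ⟨hf', hf'f⟩, hf'q⟩ := hfib ▸ hsingle q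
    exact ⟨f', hf', hf'f, hf'q⟩

end SemiprojClosed

theorem mem_image_restrictTo_iff {R : Set Q} {H : Set (Q → A)} {g : Q → A} :
    restrictTo R g ∈ restrictTo R '' H ↔ ∃ f ∈ H, EqOn f g R := by
  simp only [mem_image, restrictTo, funext_iff, Subtype.forall]
  rfl

namespace ClInvariant

variable {F : ∀ n : ℕ, Set ((Fin n → A) → A)} {H : Set (Q → A)}

theorem image_restrictTo (hH : ClInvariant F H) (R : Set Q) :
    ClInvariant F (restrictTo R '' H) := by
  intro m f hf X hX
  choose Y hY hYX using hX
  exact ⟨_, hH m f hf Y hY, by simp only [← hYX]; rfl⟩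

theorem of_eq_setOf_restrictTo_mem {𝓡 : Set (Set Q)}
    (hR : ∀ R ∈ 𝓡, ClInvariant F (restrictTo R '' H))
    (hdec : H = {f | ∀ R ∈ 𝓡, restrictTo R f ∈ restrictTo R '' H}) : ClInvariant F H := by
  intro m f hf X hX
  rw [hdec]
  exact fun R hRmem => hR R hRmem m f hf _ fun k => mem_image_of_mem _ (hX k)

end ClInvariant

end Semiprojections

theorem stmt_19_general {A Q : Type*} [Finite A] [Finite Q]
    (n : ℕ) (hn : 3 ≤ n)
    (F : ∀ n : ℕ, Set ((Fin n → A) → A)) (hΔ : DeltaS F n)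
    (H : Set (Q → A)) :
    -- the decomposition family: singletons, pairs in [Q]^{2,0}_H, and Q^{(n)}_H
    let 𝓡 : Set (Set Q) := {R | (∃ q : Q, R = {q}) ∨
      (∃ p q : Q, p ≠ q ∧ R = {p, q} ∧ ∃ σ : Equiv.Perm A, ∀ h ∈ H, h q = σ (h p)) ∨
      R = {q : Q | (valuesAt H q).ncard < n}}
    (ClInvariant F H ↔
      (∀ R ∈ 𝓡, ClInvariant F (restrictTo R '' H)) ∧
      H = {f : Q → A | ∀ R ∈ 𝓡, restrictTo R f ∈ restrictTo R '' H}) := by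
  intro 𝓡
  refine ⟨fun hH => ⟨fun R _ => hH.image_restrictTo R, ?_⟩,
    fun ⟨hR, hdec⟩ => ClInvariant.of_eq_setOf_restrictTo_mem hR hdec⟩
  obtain ⟨i, hi⟩ := hΔ
  have hS : SemiprojClosed i H := fun c hc j =>
    let ⟨s, hs, hsc, hsx⟩ := hi c hc j
    ⟨s, hsx, hsc, hH n s hs⟩
  refine Set.Subset.antisymm (fun g hg R _ => Set.mem_image_of_mem _ hg) fun g hg => ?_
  simp only [Set.mem_ofPred_eq, mem_image_restrictTo_iff] at hg
  refine hS.mem_of_decomposable hn (fun q => ?_) (fun p q hpq hlink => ?_)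
    (hg _ (Or.inr (Or.inr rfl)))
  · obtain ⟨f, hf, hfg⟩ := hg {q} (Or.inl ⟨q, rfl⟩)
    exact ⟨f, hf, hfg rfl⟩
  · obtain ⟨f, hf, hfg⟩ := hg {p, q} (Or.inr (Or.inl ⟨p, q, hpq, rfl, hlink⟩))
    exact ⟨f, hf, hfg (Set.mem_insert _ _), hfg (Set.mem_insert_of_mem _ rfl)⟩

theorem stmt_19 {A Q : Type*} [Finite A] [Nonempty A] [Finite Q] [Nonempty Q]
    (n : ℕ) (hn : 3 ≤ n)
    (F : ∀ n : ℕ, Set ((Fin n → A) → A)) (hF : IsClone F) (hΔ : DeltaS F n)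
    (H : Set (Q → A)) :
    -- the decomposition family: singletons, pairs in [Q]^{2,0}_H, and Q^{(n)}_H
    let 𝓡 : Set (Set Q) := {R | (∃ q : Q, R = {q}) ∨
      (∃ p q : Q, p ≠ q ∧ R = {p, q} ∧ ∃ σ : Equiv.Perm A, ∀ h ∈ H, h q = σ (h p)) ∨
      R = {q : Q | (valuesAt H q).ncard < n}}
    (ClInvariant F H ↔
      (∀ R ∈ 𝓡, ClInvariant F (restrictTo R '' H)) ∧
      H = {f : Q → A | ∀ R ∈ 𝓡, restrictTo R f ∈ restrictTo R '' H}) :=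
  stmt_19_general n hn F hΔ H
end
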